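/- arXiv:2412.07994 — 3 statements merged into one kernel-verified Lean document; each statement's English description precedes it below -/
import Mathlib

section
/- Let G be a group generated by a finite symmetric set with word length ℓ, H ≤ G a subgroup, and π : G → G/H the left-coset projection. If G/H has subexponential growth, i.e. limsup_{n→∞} |π(B(n))|^{1/n} = 1, then for every finitely supported f : G → ℂ the spectral radii in ℓ¹ and in the hybrid operator norm agree: limsup_{n→∞} ‖f^{(n)}‖₁^{1/n} = limsup_{n→∞} ‖f^{(n)}‖_h^{1/n}, where f^{(n)} denotes the n-fold convolution power of f. -/
open scoped BigOperators

attribute [local instance] Classical.propDecidable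

section Defs

variable {G : Type*} [Group G]

/-- Word length with respect to a generating set `S`. -/
noncomputable def wordLength (S : Set G) (x : G) : ℕ :=
  sInf {n | ∃ l : List G, (∀ s ∈ l, s ∈ S) ∧ l.length = n ∧ l.prod = x}

/-- Convolution of finitely supported functions:
`(f * ϕ) x = ∑ z, f z * ϕ (z⁻¹ * x)`. -/
noncomputable def conv {k : Type*} [Semiring k] (f ϕ : G →₀ k) : G →₀ k :=
  f.sum fun z c => c • Finsupp.mapDomain (fun x => z * x) ϕ

/-- `n`-fold convolution power. -/
noncomputable def convPow {k : Type*} [Semiring k] (f : G →₀ k) : ℕ → G →₀ k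
  | 0 => Finsupp.single 1 1
  | n + 1 => conv f (convPow f n)

/-- ℓ² norm of a finitely supported function. -/
noncomputable def l2Norm {α k : Type*} [NormedAddCommGroup k] (f : α →₀ k) : ℝ :=
  Real.sqrt (∑ x ∈ f.support, ‖f x‖ ^ 2)

/-- ℓ¹ norm of a finitely supported function. -/
noncomputable def l1Norm {α k : Type*} [NormedAddCommGroup k] (f : α →₀ k) : ℝ :=
  ∑ x ∈ f.support, ‖f x‖

/-- The hybrid `(2,1)` norm with respect to the subgroup `H`:
`‖f‖_{(2,1)} = sqrt (∑_{gH ∈ G/H} (∑_{x ∈ gH} |f x|)²)`. -/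
noncomputable def l21Norm (H : Subgroup G) {k : Type*} [NormedAddCommGroup k]
    (f : G →₀ k) : ℝ :=
  l2Norm (Finsupp.mapDomain (QuotientGroup.mk : G → G ⧸ H) (f.mapRange norm norm_zero))

/-- Hybrid operator norm `‖f‖_h`. -/
noncomputable def hybridOpNorm (H : Subgroup G) (f : G →₀ ℂ) : ℝ :=
  sSup {c : ℝ | ∃ ϕ : G →₀ ℂ, l21Norm H ϕ ≤ 1 ∧ c = l21Norm H (conv f ϕ)}

/-- Regular operator norm `‖f‖_*`. -/
noncomputable def regOpNorm (f : G →₀ ℂ) : ℝ :=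
  sSup {c : ℝ | ∃ ξ : G →₀ ℂ, l2Norm ξ ≤ 1 ∧ c = l2Norm (conv f ξ)}

/-- The quasi-regular representation:
`(λ_{G/H}(f) ξ)(gH) = ∑ z, f z * ξ (z⁻¹ g H)`. -/
noncomputable def quasiReg (H : Subgroup G) (f : G →₀ ℂ) (ξ : (G ⧸ H) →₀ ℂ) :
    (G ⧸ H) →₀ ℂ :=
  f.sum fun z c => c • Finsupp.mapDomain (fun q => z • q) ξ

/-- Quasi-regular operator norm `‖λ_{G/H}(f)‖`. -/
noncomputable def quasiRegOpNorm (H : Subgroup G) (f : G →₀ ℂ) : ℝ :=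
  sSup {c : ℝ | ∃ ξ : (G ⧸ H) →₀ ℂ, l2Norm ξ ≤ 1 ∧ c = l2Norm (quasiReg H f ξ)}

/-- Embed a real finitely supported function into the complex valued ones. -/
noncomputable def toC {α : Type*} (f : α →₀ ℝ) : α →₀ ℂ :=
  f.mapRange Complex.ofReal Complex.ofReal_zero

/-- Pointwise weight of a function by `(1 + ℓ)^s`. -/
noncomputable def weight (S : Set G) (s : ℝ) (f : G →₀ ℂ) : G →₀ ℂ where
  support := f.support
  toFun x := ((((1 : ℝ) + (wordLength S x : ℝ)) ^ s : ℝ) : ℂ) * f x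
  mem_support_toFun x := by
    simp only [Finsupp.mem_support_iff]
    have hpos : (0 : ℝ) < ((1 : ℝ) + (wordLength S x : ℝ)) ^ s :=
      Real.rpow_pos_of_pos (by positivity) s
    constructor
    · intro hf h
      rcases mul_eq_zero.mp h with h1 | h2
      · exact hpos.ne' (by exact_mod_cast h1)
      · exact hf h2
    · intro h hf
      exact h (by rw [hf, mul_zero])

/-- The involution `f⋆ x = f x⁻¹`. -/
noncomputable def starFun {k : Type*} [Zero k] (f : G →₀ k) : G →₀ k :=
  Finsupp.equivMapDomain (Equiv.inv G) f

/-- Sum of the values of `g` over the subgroup `H`. -/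
noncomputable def sumOverSubgroup (H : Subgroup G) (g : G →₀ ℝ) : ℝ :=
  ∑ x ∈ g.support.filter (fun x => x ∈ H), g x

/-- `f` is supported in the ball of radius `R` for the word length of `S`. -/
def supportedInBall (S : Set G) (R : ℕ) {k : Type*} [Zero k] (f : G →₀ k) : Prop :=
  ∀ x ∈ f.support, wordLength S x ≤ R

/-- Rapid decay property for the pair `(G, H)`. -/
def PairRD (S : Set G) (H : Subgroup G) : Prop :=
  ∃ C : ℝ, ∃ D : ℕ, 0 ≤ C ∧ ∀ (R : ℕ) (f ϕ : G →₀ ℂ), supportedInBall S R f →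
    l21Norm H (conv f ϕ) ≤ C * ((R : ℝ) + 1) ^ D * l21Norm H f * l21Norm H ϕ

/-- Rapid decay property for the group `G`. -/
def GroupRD (S : Set G) : Prop :=
  ∃ C : ℝ, ∃ D : ℕ, 0 ≤ C ∧ ∀ (R : ℕ) (f ϕ : G →₀ ℂ), supportedInBall S R f →
    l2Norm (conv f ϕ) ≤ C * ((R : ℝ) + 1) ^ D * l2Norm f * l2Norm ϕ

/-- Polynomial growth of a subgroup for the induced length. -/
def polyGrowthSubgroup (S : Set G) (H : Subgroup G) : Prop :=
  ∃ C : ℝ, ∃ D : ℕ, 0 ≤ C ∧ ∀ R : ℕ,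
    (Set.ncard {x : G | x ∈ H ∧ wordLength S x ≤ R} : ℝ) ≤ C * ((R : ℝ) + 1) ^ D

/-- Polynomial growth of the coset space `G/H`. -/
def polyGrowthQuotient (S : Set G) (H : Subgroup G) : Prop :=
  ∃ C : ℝ, ∃ D : ℕ, 0 ≤ C ∧ ∀ R : ℕ,
    (Set.ncard ((QuotientGroup.mk : G → G ⧸ H) '' {x : G | wordLength S x ≤ R}) : ℝ) ≤
      C * ((R : ℝ) + 1) ^ D

/-- Co-amenability of `H` in `G`: Følner condition for the left action on `G/H`. -/
def Coamenable (H : Subgroup G) : Prop :=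
  ∀ ε : ℝ, 0 < ε → ∀ F : Finset G, ∃ V : Finset (G ⧸ H), V.Nonempty ∧
    ((symmDiff (Finset.image₂ (· • ·) F V) V).card : ℝ) ≤ ε * (V.card : ℝ)

/-- Matrix coefficient `⟨λ_{G/H}(γ) ξ, η⟩` of the quasi-regular representation
on `ℓ²(G/H)`. -/
noncomputable def qrCoeff (H : Subgroup G) (γ : G)
    (ξ η : lp (fun _ : G ⧸ H => ℂ) 2) : ℂ :=
  ∑' q : G ⧸ H, ξ (γ⁻¹ • q) * (starRingEnd ℂ) (η q)

/-- The spectral radius of the random walk induced on `G/H`: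
`ρ = limsup P_{2n}(H,H)^{1/(2n)}`. -/
noncomputable def specRadQuot (H : Subgroup G) (μ : G →₀ ℝ) : ℝ :=
  Filter.limsup (fun n : ℕ =>
    (sumOverSubgroup H (convPow μ (2 * n))) ^ ((1 : ℝ) / (2 * (n : ℝ)))) Filter.atTop

end Defs

/-!
Young's inequality `‖f * ϕ‖_{(2,1)} ≤ ‖f‖₁ ‖ϕ‖_{(2,1)}` gives `‖g‖_h ≤ ‖g‖₁`, so only
`limsup ‖f⁽ⁿ⁾‖₁^{1/n} ≤ limsup ‖f⁽ⁿ⁾‖_h^{1/n}` needs an argument. If `f` is supported in `B(R)`,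
then `f⁽ⁿ⁾` is supported in `B(nR)` and so meets at most `|π(B(nR))|` cosets of `H`;
Cauchy–Schwarz over these cosets, and `‖g‖_{(2,1)} = ‖g * δ₁‖_{(2,1)} ≤ ‖g‖_h`, give
`‖f⁽ⁿ⁾‖₁ ≤ |π(B(nR))|^{1/2} ‖f⁽ⁿ⁾‖_h`. Subexponential growth of `G/H` makes
`|π(B(nR))|^{1/(2n)}` tend to `1`.
-/

open Finsupp Filter

section Norms

variable {α β k : Type*} [NormedAddCommGroup k]

lemma l1Norm_nonneg (f : α →₀ k) : 0 ≤ l1Norm f :=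
  Finset.sum_nonneg fun _ _ => norm_nonneg _

lemma l2Norm_nonneg (f : α →₀ k) : 0 ≤ l2Norm f :=
  Real.sqrt_nonneg _

lemma l1Norm_eq_sum_of_support_subset {f : α →₀ k} {t : Finset α} (h : f.support ⊆ t) :
    l1Norm f = ∑ x ∈ t, ‖f x‖ :=
  Finset.sum_subset h fun x _ hx => by simp [notMem_support_iff.mp hx]

lemma l2Norm_eq_sqrt_sum_of_support_subset {f : α →₀ k} {t : Finset α}
    (h : f.support ⊆ t) : l2Norm f = √(∑ x ∈ t, ‖f x‖ ^ 2) :=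
  congrArg Real.sqrt <| Finset.sum_subset h fun x _ hx => by simp [notMem_support_iff.mp hx]

lemma l2Norm_eq_norm_toLp {f : α →₀ k} {t : Finset α} (h : f.support ⊆ t) :
    l2Norm f = ‖WithLp.toLp 2 (fun i : t => f i)‖ := by
  rw [l2Norm_eq_sqrt_sum_of_support_subset h, PiLp.norm_eq_of_L2, ← Finset.sum_coe_sort t]

@[simp]
lemma l1Norm_zero : l1Norm (0 : α →₀ k) = 0 := by
  simp [l1Norm]

lemma l1Norm_add_le (f g : α →₀ k) : l1Norm (f + g) ≤ l1Norm f + l1Norm g := by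
  rw [l1Norm_eq_sum_of_support_subset (t := f.support ∪ g.support) support_add,
    l1Norm_eq_sum_of_support_subset (t := f.support ∪ g.support) Finset.subset_union_left,
    l1Norm_eq_sum_of_support_subset (t := f.support ∪ g.support) Finset.subset_union_right,
    ← Finset.sum_add_distrib]
  exact Finset.sum_le_sum fun x _ => norm_add_le _ _

lemma l2Norm_add_le (f g : α →₀ k) : l2Norm (f + g) ≤ l2Norm f + l2Norm g := by
  rw [l2Norm_eq_norm_toLp (t := f.support ∪ g.support) support_add,
    l2Norm_eq_norm_toLp (t := f.support ∪ g.support) Finset.subset_union_left,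
    l2Norm_eq_norm_toLp (t := f.support ∪ g.support) Finset.subset_union_right]
  exact norm_add_le (WithLp.toLp 2 fun i : ↥(f.support ∪ g.support) => f i)
    (WithLp.toLp 2 fun i : ↥(f.support ∪ g.support) => g i)

lemma l1Norm_sum_le {ι : Type*} (s : Finset ι) (F : ι → α →₀ k) :
    l1Norm (∑ i ∈ s, F i) ≤ ∑ i ∈ s, l1Norm (F i) :=
  Finset.le_sum_of_subadditive (l1Norm (α := α) (k := k)) l1Norm_zero.le l1Norm_add_le s F

lemma l1Norm_smul_le {R : Type*} [NormedRing R] (c : R) (f : α →₀ R) :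
    l1Norm (c • f) ≤ ‖c‖ * l1Norm f := by
  rw [l1Norm_eq_sum_of_support_subset support_smul, l1Norm, Finset.mul_sum]
  exact Finset.sum_le_sum fun x _ => norm_mul_le _ _

lemma l2Norm_smul (r : ℝ) (u : α →₀ ℝ) : l2Norm (r • u) = |r| * l2Norm u := by
  rw [l2Norm_eq_sqrt_sum_of_support_subset support_smul, l2Norm, ← Real.sqrt_sq_eq_abs,
    ← Real.sqrt_mul (sq_nonneg r), Finset.mul_sum]
  simp only [Finsupp.smul_apply, smul_eq_mul, norm_mul, mul_pow, Real.norm_eq_abs, sq_abs]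

lemma l2Norm_le_of_norm_le {k' : Type*} [NormedAddCommGroup k'] {u : α →₀ k} {v : α →₀ k'}
    (h : ∀ x, ‖u x‖ ≤ ‖v x‖) : l2Norm u ≤ l2Norm v := by
  rw [l2Norm_eq_sqrt_sum_of_support_subset (t := u.support ∪ v.support)
      Finset.subset_union_left,
    l2Norm_eq_sqrt_sum_of_support_subset (t := u.support ∪ v.support)
      Finset.subset_union_right]
  gcongr with x
  exact h x

lemma l1Norm_equivMapDomain (e : α ≃ β) (f : α →₀ k) :
    l1Norm (equivMapDomain e f) = l1Norm f :=
  sum_equivMapDomain e f fun _ v => ‖v‖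

lemma l2Norm_equivMapDomain (e : α ≃ β) (f : α →₀ k) :
    l2Norm (equivMapDomain e f) = l2Norm f :=
  congrArg Real.sqrt (sum_equivMapDomain e f fun _ v => ‖v‖ ^ 2)

lemma l1Norm_le_sqrt_card_support_mul_l2Norm (f : α →₀ k) :
    l1Norm f ≤ √(f.support.card) * l2Norm f := by
  calc l1Norm f = ∑ x ∈ f.support, 1 * ‖f x‖ := by simp [l1Norm]
    _ ≤ √(∑ x ∈ f.support, 1 ^ 2) * √(∑ x ∈ f.support, ‖f x‖ ^ 2) :=
      Real.sum_mul_le_sqrt_mul_sqrt _ _ _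
    _ = √(f.support.card) * l2Norm f := by simp [l2Norm]

end Norms

lemma Finsupp.mapDomain_apply_nonneg {α β : Type*} (h : α → β) {u : α →₀ ℝ}
    (hu : ∀ x, 0 ≤ u x) (b : β) : 0 ≤ mapDomain h u b := by
  rw [mapDomain, sum_apply]
  exact Finset.sum_nonneg fun x _ => by
    dsimp only
    rw [single_apply]
    split_ifs
    exacts [hu x, le_rfl]

lemma Finsupp.mapDomain_apply_mono {α β : Type*} (h : α → β) {u v : α →₀ ℝ}
    (huv : ∀ x, u x ≤ v x) (b : β) : mapDomain h u b ≤ mapDomain h v b := by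
  have hnonneg : 0 ≤ mapDomain h (v - u) b :=
    mapDomain_apply_nonneg h (fun x => sub_nonneg.mpr (huv x)) b
  rwa [mapDomain_sub, sub_apply, sub_nonneg] at hnonneg

section CosetMass

variable {G k : Type*} [Group G] [NormedAddCommGroup k] (H : Subgroup G)

/-- `cosetMass H f (gH) = ∑_{x ∈ gH} ‖f x‖`: the inner sum of the hybrid norm. -/
noncomputable def cosetMass (f : G →₀ k) : G ⧸ H →₀ ℝ :=
  mapDomain (QuotientGroup.mk : G → G ⧸ H) (f.mapRange norm norm_zero)

lemma l21Norm_eq_l2Norm_cosetMass (f : G →₀ k) : l21Norm H f = l2Norm (cosetMass H f) := rfl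

lemma cosetMass_nonneg (f : G →₀ k) (q : G ⧸ H) : 0 ≤ cosetMass H f q :=
  mapDomain_apply_nonneg _ (fun x => norm_nonneg (f x)) q

lemma cosetMass_add_le (f g : G →₀ k) (q : G ⧸ H) :
    cosetMass H (f + g) q ≤ cosetMass H f q + cosetMass H g q := by
  rw [← Finsupp.add_apply, cosetMass, cosetMass, cosetMass, ← mapDomain_add]
  exact mapDomain_apply_mono _ (fun x => norm_add_le (f x) (g x)) q

lemma cosetMass_smul_le {R : Type*} [NormedRing R] (c : R) (f : G →₀ R) (q : G ⧸ H) :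
    cosetMass H (c • f) q ≤ ‖c‖ * cosetMass H f q := by
  rw [← smul_eq_mul, ← Finsupp.smul_apply, cosetMass, cosetMass, ← mapDomain_smul]
  exact mapDomain_apply_mono _ (fun x => norm_mul_le c (f x)) q

lemma cosetMass_mapDomain_mulLeft (z : G) (f : G →₀ k) :
    cosetMass H (mapDomain (z * ·) f) = equivMapDomain (MulAction.toPerm z) (cosetMass H f) := by
  have hmul : mapDomain (z * ·) f = equivMapDomain (Equiv.mulLeft z) f := by
    rw [equivMapDomain_eq_mapDomain]
    rfl
  have hnorm : (equivMapDomain (Equiv.mulLeft z) f).mapRange norm norm_zero =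
      equivMapDomain (Equiv.mulLeft z) (f.mapRange norm norm_zero) := by
    ext
    simp
  rw [cosetMass, cosetMass, hmul, hnorm, equivMapDomain_eq_mapDomain, equivMapDomain_eq_mapDomain,
    ← mapDomain_comp, ← mapDomain_comp]
  rfl

lemma support_cosetMass_subset (f : G →₀ k) :
    (cosetMass H f).support ⊆ f.support.image QuotientGroup.mk :=
  mapDomain_support.trans (Finset.image_subset_image support_mapRange)

lemma l1Norm_cosetMass (f : G →₀ k) : l1Norm (cosetMass H f) = l1Norm f := by
  calc l1Norm (cosetMass H f) = (cosetMass H f).sum fun _ v => v :=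
        Finset.sum_congr rfl fun q _ => Real.norm_of_nonneg (cosetMass_nonneg H f q)
    _ = (f.mapRange norm norm_zero).sum fun _ v => v :=
        sum_mapDomain_index (fun _ => rfl) (fun _ _ _ => rfl)
    _ = l1Norm f := sum_mapRange_index fun _ => rfl

end CosetMass

section Convolution

variable {G R : Type*} [Group G] (H : Subgroup G)

lemma l21Norm_nonneg {k : Type*} [NormedAddCommGroup k] (f : G →₀ k) : 0 ≤ l21Norm H f :=
  l2Norm_nonneg _

lemma l21Norm_add_le {k : Type*} [NormedAddCommGroup k] (f g : G →₀ k) :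
    l21Norm H (f + g) ≤ l21Norm H f + l21Norm H g := by
  simp only [l21Norm_eq_l2Norm_cosetMass]
  refine (l2Norm_le_of_norm_le fun q => ?_).trans (l2Norm_add_le _ _)
  rw [Finsupp.add_apply, Real.norm_of_nonneg (cosetMass_nonneg H _ q),
    Real.norm_of_nonneg (add_nonneg (cosetMass_nonneg H f q) (cosetMass_nonneg H g q))]
  exact cosetMass_add_le H f g q

lemma l21Norm_sum_le {k ι : Type*} [NormedAddCommGroup k] (s : Finset ι) (F : ι → G →₀ k) :
    l21Norm H (∑ i ∈ s, F i) ≤ ∑ i ∈ s, l21Norm H (F i) :=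
  Finset.le_sum_of_subadditive (l21Norm H (k := k)) (by simp [l21Norm, l2Norm])
    (l21Norm_add_le H) s F

lemma l21Norm_smul_le [NormedRing R] (c : R) (f : G →₀ R) :
    l21Norm H (c • f) ≤ ‖c‖ * l21Norm H f := by
  rw [l21Norm_eq_l2Norm_cosetMass, l21Norm_eq_l2Norm_cosetMass, ← abs_norm, ← l2Norm_smul]
  refine l2Norm_le_of_norm_le fun q => ?_
  rw [Finsupp.smul_apply, smul_eq_mul, Real.norm_of_nonneg (cosetMass_nonneg H _ q),
    Real.norm_of_nonneg (mul_nonneg (norm_nonneg c) (cosetMass_nonneg H f q))]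
  exact cosetMass_smul_le H c f q

lemma l21Norm_mapDomain_mulLeft {k : Type*} [NormedAddCommGroup k] (z : G) (f : G →₀ k) :
    l21Norm H (mapDomain (z * ·) f) = l21Norm H f := by
  rw [l21Norm_eq_l2Norm_cosetMass, l21Norm_eq_l2Norm_cosetMass, cosetMass_mapDomain_mulLeft,
    l2Norm_equivMapDomain]

lemma l1Norm_mapDomain_mulLeft {k : Type*} [NormedAddCommGroup k] (z : G) (f : G →₀ k) :
    l1Norm (mapDomain (z * ·) f) = l1Norm f := by
  rw [← l1Norm_equivMapDomain (Equiv.mulLeft z) f, equivMapDomain_eq_mapDomain]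
  rfl

lemma conv_eq_sum [Semiring R] (f ϕ : G →₀ R) :
    conv f ϕ = ∑ z ∈ f.support, f z • mapDomain (z * ·) ϕ := rfl

lemma conv_single_one [Semiring R] (f : G →₀ R) : conv f (single 1 1) = f := by
  simp only [conv_eq_sum, mapDomain_single, mul_one, smul_single, smul_eq_mul]
  exact sum_single f

lemma l1Norm_conv_le [NormedRing R] (f ϕ : G →₀ R) : l1Norm (conv f ϕ) ≤ l1Norm f * l1Norm ϕ := by
  rw [conv_eq_sum]
  refine (l1Norm_sum_le _ _).trans
    ((Finset.sum_le_sum fun z _ => ?_).trans_eq (Finset.sum_mul _ _ _).symm)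
  exact (l1Norm_smul_le _ _).trans_eq (by rw [l1Norm_mapDomain_mulLeft])

lemma l21Norm_conv_le [NormedRing R] (f ϕ : G →₀ R) :
    l21Norm H (conv f ϕ) ≤ l1Norm f * l21Norm H ϕ := by
  rw [conv_eq_sum, l1Norm, Finset.sum_mul]
  refine (l21Norm_sum_le H _ _).trans (Finset.sum_le_sum fun z _ => ?_)
  exact (l21Norm_smul_le H _ _).trans_eq (by rw [l21Norm_mapDomain_mulLeft])

lemma l1Norm_convPow_le [NormedRing R] [NormOneClass R] (f : G →₀ R) (n : ℕ) :
    l1Norm (convPow f n) ≤ l1Norm f ^ n := by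
  induction n with
  | zero =>
    rw [convPow, pow_zero, l1Norm_eq_sum_of_support_subset support_single_subset]
    simp
  | succ n ih =>
    calc l1Norm (convPow f (n + 1)) ≤ l1Norm f * l1Norm (convPow f n) := l1Norm_conv_le f _
      _ ≤ l1Norm f ^ (n + 1) := by
        rw [pow_succ']
        exact mul_le_mul_of_nonneg_left ih (l1Norm_nonneg f)

lemma l21Norm_conv_le_l1Norm {f ϕ : G →₀ ℂ} (hϕ : l21Norm H ϕ ≤ 1) :
    l21Norm H (conv f ϕ) ≤ l1Norm f :=
  (l21Norm_conv_le H f ϕ).trans (mul_le_of_le_one_right (l1Norm_nonneg f) hϕ)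

lemma bddAbove_hybridOpNorm_set (f : G →₀ ℂ) :
    BddAbove {c : ℝ | ∃ ϕ : G →₀ ℂ, l21Norm H ϕ ≤ 1 ∧ c = l21Norm H (conv f ϕ)} :=
  ⟨l1Norm f, by rintro _ ⟨ϕ, hϕ, rfl⟩; exact l21Norm_conv_le_l1Norm H hϕ⟩

lemma hybridOpNorm_le_l1Norm (f : G →₀ ℂ) : hybridOpNorm H f ≤ l1Norm f :=
  Real.sSup_le (by rintro _ ⟨ϕ, hϕ, rfl⟩; exact l21Norm_conv_le_l1Norm H hϕ) (l1Norm_nonneg f)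

lemma l21Norm_le_hybridOpNorm (f : G →₀ ℂ) : l21Norm H f ≤ hybridOpNorm H f :=
  le_csSup (bddAbove_hybridOpNorm_set H f)
    ⟨single 1 1, by simp [l21Norm, l2Norm], by rw [conv_single_one]⟩

lemma hybridOpNorm_nonneg (f : G →₀ ℂ) : 0 ≤ hybridOpNorm H f :=
  (l21Norm_nonneg H f).trans (l21Norm_le_hybridOpNorm H f)

end Convolution

section WordLength

variable {G : Type*} [Group G] {S : Set G}

lemma exists_list_prod_eq_of_closure_eq_top (hsym : ∀ s ∈ S, s⁻¹ ∈ S)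
    (hgen : Subgroup.closure S = ⊤) (x : G) : ∃ l : List G, (∀ s ∈ l, s ∈ S) ∧ l.prod = x := by
  have hS : S ∪ S⁻¹ = S := Set.union_eq_left.mpr fun s hs => by simpa using hsym _ hs
  apply Submonoid.exists_list_of_mem_closure
  rw [← hS, ← Subgroup.closure_toSubmonoid, hgen]
  trivial

lemma wordLength_le_length {l : List G} (hl : ∀ s ∈ l, s ∈ S) :
    wordLength S l.prod ≤ l.length :=
  Nat.sInf_le ⟨l, hl, rfl, rfl⟩

lemma exists_list_length_eq_wordLength (hsym : ∀ s ∈ S, s⁻¹ ∈ S)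
    (hgen : Subgroup.closure S = ⊤) (x : G) :
    ∃ l : List G, (∀ s ∈ l, s ∈ S) ∧ l.length = wordLength S x ∧ l.prod = x := by
  obtain ⟨l, hlS, hl⟩ := exists_list_prod_eq_of_closure_eq_top hsym hgen x
  exact Nat.sInf_mem (s := {n | ∃ l : List G, (∀ s ∈ l, s ∈ S) ∧ l.length = n ∧ l.prod = x})
    ⟨l.length, l, hlS, rfl, hl⟩

lemma wordLength_one : wordLength S (1 : G) = 0 :=
  Nat.le_zero.mp (wordLength_le_length (l := []) (by simp))

lemma wordLength_mul_le (hsym : ∀ s ∈ S, s⁻¹ ∈ S) (hgen : Subgroup.closure S = ⊤) (x y : G) :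
    wordLength S (x * y) ≤ wordLength S x + wordLength S y := by
  obtain ⟨lx, hxS, hxlen, rfl⟩ := exists_list_length_eq_wordLength hsym hgen x
  obtain ⟨ly, hyS, hylen, rfl⟩ := exists_list_length_eq_wordLength hsym hgen y
  have h := wordLength_le_length (S := S) (l := lx ++ ly)
    fun s hs => (List.mem_append.mp hs).elim (hxS s) (hyS s)
  rwa [List.prod_append, List.length_append, hxlen, hylen] at h

lemma finite_setOf_wordLength_le (hfin : S.Finite) (hsym : ∀ s ∈ S, s⁻¹ ∈ S)
    (hgen : Subgroup.closure S = ⊤) (R : ℕ) : {x : G | wordLength S x ≤ R}.Finite := by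
  have : Finite S := hfin.to_subtype
  refine ((List.finite_length_le S R).image fun l => (l.map (↑)).prod).subset fun x hx => ?_
  obtain ⟨l, hlS, hlen, rfl⟩ := exists_list_length_eq_wordLength hsym hgen x
  lift l to List S using hlS
  refine ⟨l, ?_, rfl⟩
  rw [Set.mem_ofPred_eq] at hx ⊢
  rwa [← hlen, List.length_map] at hx

variable {R : Type*} [Semiring R]

lemma supportedInBall_conv (hsym : ∀ s ∈ S, s⁻¹ ∈ S) (hgen : Subgroup.closure S = ⊤)
    {m n : ℕ} {f g : G →₀ R} (hf : supportedInBall S m f) (hg : supportedInBall S n g) :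
    supportedInBall S (m + n) (conv f g) := by
  intro x hx
  rw [conv_eq_sum] at hx
  obtain ⟨z, hz, hxz⟩ := Finset.mem_biUnion.mp (support_finsetSum hx)
  obtain ⟨y, hy, rfl⟩ := Finset.mem_image.mp (mapDomain_support (support_smul hxz))
  exact (wordLength_mul_le hsym hgen z y).trans (add_le_add (hf z hz) (hg y hy))

lemma supportedInBall_convPow (hsym : ∀ s ∈ S, s⁻¹ ∈ S) (hgen : Subgroup.closure S = ⊤)
    {m : ℕ} {f : G →₀ R} (hf : supportedInBall S m f) (n : ℕ) :
    supportedInBall S (n * m) (convPow f n) := by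
  induction n with
  | zero =>
    intro x hx
    rw [Finset.mem_singleton.mp (support_single_subset hx), wordLength_one, zero_mul]
  | succ n ih =>
    rw [add_one_mul, add_comm]
    exact supportedInBall_conv hsym hgen hf ih

end WordLength

section CosetCount

variable {G : Type*} [Group G] {S : Set G} (H : Subgroup G)

lemma card_support_cosetMass_le_ncard {k : Type*} [NormedAddCommGroup k] {R : ℕ} {g : G →₀ k}
    (hB : {x : G | wordLength S x ≤ R}.Finite) (hg : supportedInBall S R g) :
    (cosetMass H g).support.card ≤
      ((QuotientGroup.mk : G → G ⧸ H) '' {x : G | wordLength S x ≤ R}).ncard := by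
  rw [← Set.ncard_coe_finset]
  refine Set.ncard_le_ncard (fun q hq => ?_) (hB.image _)
  obtain ⟨x, hx, rfl⟩ := Finset.mem_image.mp (support_cosetMass_subset H g hq)
  exact ⟨x, hg x hx, rfl⟩

lemma l1Norm_le_sqrt_ncard_mul_hybridOpNorm {R : ℕ} {g : G →₀ ℂ}
    (hB : {x : G | wordLength S x ≤ R}.Finite) (hg : supportedInBall S R g) :
    l1Norm g ≤ √((QuotientGroup.mk : G → G ⧸ H) '' {x : G | wordLength S x ≤ R}).ncard *
      hybridOpNorm H g :=
  calc l1Norm g = l1Norm (cosetMass H g) := (l1Norm_cosetMass H g).symm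
    _ ≤ √(cosetMass H g).support.card * l21Norm H g :=
      l1Norm_le_sqrt_card_support_mul_l2Norm _
    _ ≤ _ := mul_le_mul
      (Real.sqrt_le_sqrt (by exact_mod_cast card_support_cosetMass_le_ncard H hB hg))
      (l21Norm_le_hybridOpNorm H g) (l21Norm_nonneg H g) (Real.sqrt_nonneg _)

end CosetCount

section Limsup

open Topology

lemma eventually_le_pow_of_limsup_rpow_eq_one {a : ℕ → ℝ} (ha : ∀ m, 0 ≤ a m)
    (h : limsup (fun m : ℕ => a m ^ ((1 : ℝ) / m)) atTop = 1) {δ : ℝ} (hδ : 1 < δ) :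
    ∀ᶠ m in atTop, a m ≤ δ ^ m := by
  -- an unbounded sequence has `limsup = sInf ∅ = 0` in `ℝ`
  have hbdd : IsBoundedUnder (· ≤ ·) atTop fun m : ℕ => a m ^ ((1 : ℝ) / m) := by
    by_contra hunbdd
    rw [Real.limsup_of_not_isBoundedUnder hunbdd] at h
    exact zero_ne_one h
  filter_upwards [eventually_lt_of_limsup_lt (h ▸ hδ) hbdd, eventually_ne_atTop 0]
    with m hm hm0
  calc a m = (a m ^ ((1 : ℝ) / m)) ^ m := by rw [one_div, Real.rpow_inv_natCast_pow (ha m) hm0]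
    _ ≤ δ ^ m := pow_le_pow_left₀ (Real.rpow_nonneg (ha m) _) hm.le m

lemma eventually_comp_mul_le_pow {a : ℕ → ℝ} (h : ∀ δ > 1, ∀ᶠ m in atTop, a m ≤ δ ^ m)
    {R : ℕ} (hR : R ≠ 0) {δ : ℝ} (hδ : 1 < δ) : ∀ᶠ n in atTop, a (n * R) ≤ δ ^ n := by
  have hroot : 1 < δ ^ ((R : ℝ)⁻¹) := Real.one_lt_rpow hδ (by positivity)
  have hmul : Tendsto (· * R) atTop atTop := tendsto_id.atTop_mul_const' (Nat.pos_of_ne_zero hR)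
  filter_upwards [hmul.eventually (h _ hroot)] with n hn
  rwa [pow_mul', Real.rpow_inv_natCast_pow (by positivity) hR] at hn

lemma rpow_one_div_le_mul_of_le_pow_mul {x y δ : ℝ} {n : ℕ} (hx : 0 ≤ x) (hy : 0 ≤ y)
    (hδ : 0 ≤ δ) (hn : n ≠ 0) (h : x ≤ δ ^ n * y) :
    x ^ ((1 : ℝ) / n) ≤ δ * y ^ ((1 : ℝ) / n) :=
  calc x ^ ((1 : ℝ) / n) ≤ (δ ^ n * y) ^ ((1 : ℝ) / n) := by gcongr
    _ = δ * y ^ ((1 : ℝ) / n) := by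
      rw [Real.mul_rpow (by positivity) hy, one_div, Real.pow_rpow_inv_natCast hδ hn]

lemma rpow_one_div_le_max_one {x c : ℝ} {n : ℕ} (hx : 0 ≤ x) (hc : 0 ≤ c) (h : x ≤ c ^ n) :
    x ^ ((1 : ℝ) / n) ≤ max 1 c := by
  rcases eq_or_ne n 0 with rfl | hn
  · simp
  · have := rpow_one_div_le_mul_of_le_pow_mul hx zero_le_one hc hn (by rwa [mul_one])
    rw [Real.one_rpow, mul_one] at this
    exact this.trans (le_max_right 1 c)

lemma limsup_le_limsup_of_forall_eventually_le_mul {u v : ℕ → ℝ} (hu : ∀ n, 0 ≤ u n)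
    (hv : ∀ n, 0 ≤ v n) (hv_bdd : IsBoundedUnder (· ≤ ·) atTop v)
    (h : ∀ δ > 1, ∀ᶠ n in atTop, u n ≤ δ * v n) : limsup u atTop ≤ limsup v atTop := by
  have hscaled : ∀ δ > 1, limsup u atTop ≤ δ * limsup v atTop := fun δ hδ => by
    have hmono : Monotone (δ * ·) := monotone_mul_left_of_nonneg (by positivity)
    rw [hmono.map_limsup_of_continuousAt v (continuous_const_mul δ).continuousAt hv_bdd
      (isCoboundedUnder_le_of_le atTop hv)]
    exact limsup_le_limsup (h δ hδ) (isCoboundedUnder_le_of_le atTop hu)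
      (hmono.isBoundedUnder_le_comp hv_bdd)
  have hlim : Tendsto (· * limsup v atTop) (𝓝[>] 1) (𝓝 (limsup v atTop)) :=
    ((continuous_mul_const _).tendsto' 1 _ (one_mul _)).mono_left nhdsWithin_le_nhds
  exact ge_of_tendsto hlim (eventually_nhdsWithin_of_forall hscaled)

end Limsup

section SpectralRadius

variable {G : Type*} [Group G] {S : Set G} (H : Subgroup G)

lemma isBoundedUnder_rpow_l1Norm_convPow (f : G →₀ ℂ) :
    IsBoundedUnder (· ≤ ·) atTop fun n : ℕ => l1Norm (convPow f n) ^ ((1 : ℝ) / n) :=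
  isBoundedUnder_of ⟨max 1 (l1Norm f), fun n =>
    rpow_one_div_le_max_one (l1Norm_nonneg _) (l1Norm_nonneg f) (l1Norm_convPow_le f n)⟩

lemma rpow_hybridOpNorm_convPow_le (f : G →₀ ℂ) (n : ℕ) :
    hybridOpNorm H (convPow f n) ^ ((1 : ℝ) / n) ≤ l1Norm (convPow f n) ^ ((1 : ℝ) / n) :=
  Real.rpow_le_rpow (hybridOpNorm_nonneg H _) (hybridOpNorm_le_l1Norm H _) (by positivity)

lemma limsup_rpow_hybridOpNorm_convPow_le (f : G →₀ ℂ) :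
    limsup (fun n : ℕ => hybridOpNorm H (convPow f n) ^ ((1 : ℝ) / n)) atTop ≤
      limsup (fun n : ℕ => l1Norm (convPow f n) ^ ((1 : ℝ) / n)) atTop :=
  limsup_le_limsup (Eventually.of_forall (rpow_hybridOpNorm_convPow_le H f))
    (isCoboundedUnder_le_of_le atTop fun _ => Real.rpow_nonneg (hybridOpNorm_nonneg H _) _)
    (isBoundedUnder_rpow_l1Norm_convPow f)

lemma eventually_l1Norm_convPow_le_pow_mul_hybridOpNorm (hfin : S.Finite)
    (hsym : ∀ s ∈ S, s⁻¹ ∈ S) (hgen : Subgroup.closure S = ⊤)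
    (hsub : limsup (fun n : ℕ => (((QuotientGroup.mk : G → G ⧸ H) ''
      {x : G | wordLength S x ≤ n}).ncard : ℝ) ^ ((1 : ℝ) / n)) atTop = 1)
    (f : G →₀ ℂ) {δ : ℝ} (hδ : 1 < δ) :
    ∀ᶠ n in atTop, l1Norm (convPow f n) ≤ δ ^ n * hybridOpNorm H (convPow f n) := by
  obtain ⟨R, hR, hf⟩ : ∃ R : ℕ, R ≠ 0 ∧ supportedInBall S R f :=
    ⟨f.support.sup (wordLength S) + 1, by omega, fun x hx => (Finset.le_sup hx).trans (by omega)⟩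
  have hgrowth := eventually_comp_mul_le_pow
    (fun δ hδ => eventually_le_pow_of_limsup_rpow_eq_one (fun _ => Nat.cast_nonneg _) hsub hδ)
    hR (one_lt_pow₀ hδ two_ne_zero)
  filter_upwards [hgrowth] with n hn
  calc l1Norm (convPow f n)
      ≤ √((QuotientGroup.mk : G → G ⧸ H) '' {x : G | wordLength S x ≤ n * R}).ncard *
          hybridOpNorm H (convPow f n) :=
        l1Norm_le_sqrt_ncard_mul_hybridOpNorm H (finite_setOf_wordLength_le hfin hsym hgen _)
          (supportedInBall_convPow hsym hgen hf n)
    _ ≤ δ ^ n * hybridOpNorm H (convPow f n) := by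
        refine mul_le_mul_of_nonneg_right ?_ (hybridOpNorm_nonneg H _)
        rw [Real.sqrt_le_left (by positivity), ← pow_right_comm]
        exact hn

lemma limsup_rpow_l1Norm_convPow_le (hfin : S.Finite) (hsym : ∀ s ∈ S, s⁻¹ ∈ S)
    (hgen : Subgroup.closure S = ⊤)
    (hsub : limsup (fun n : ℕ => (((QuotientGroup.mk : G → G ⧸ H) ''
      {x : G | wordLength S x ≤ n}).ncard : ℝ) ^ ((1 : ℝ) / n)) atTop = 1)
    (f : G →₀ ℂ) :
    limsup (fun n : ℕ => l1Norm (convPow f n) ^ ((1 : ℝ) / n)) atTop ≤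
      limsup (fun n : ℕ => hybridOpNorm H (convPow f n) ^ ((1 : ℝ) / n)) atTop := by
  refine limsup_le_limsup_of_forall_eventually_le_mul
    (fun _ => Real.rpow_nonneg (l1Norm_nonneg _) _)
    (fun _ => Real.rpow_nonneg (hybridOpNorm_nonneg H _) _)
    ((isBoundedUnder_rpow_l1Norm_convPow f).mono_le
      (Eventually.of_forall (rpow_hybridOpNorm_convPow_le H f)))
    fun δ hδ => ?_
  filter_upwards [eventually_l1Norm_convPow_le_pow_mul_hybridOpNorm H hfin hsym hgen hsub f hδ,
    eventually_ne_atTop 0] with n hn hn0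
  exact rpow_one_div_le_mul_of_le_pow_mul (l1Norm_nonneg _) (hybridOpNorm_nonneg H _)
    (by positivity) hn0 hn

end SpectralRadius

/-- if `G/H` has subexponential growth, the spectral radii in
`ℓ¹` and in the hybrid operator norm agree for every finitely supported `f`. -/
theorem statement11 {G : Type*} [Group G] (S : Set G) (hfin : S.Finite)
    (hsym : ∀ s ∈ S, s⁻¹ ∈ S) (hgen : Subgroup.closure S = ⊤) (H : Subgroup G)
    (hsub : Filter.limsup (fun n : ℕ =>
        (Set.ncard ((QuotientGroup.mk : G → G ⧸ H) ''
          {x : G | wordLength S x ≤ n}) : ℝ) ^ ((1 : ℝ) / (n : ℝ)))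
        Filter.atTop = 1) :
    ∀ f : G →₀ ℂ,
      Filter.limsup (fun n : ℕ => (l1Norm (convPow f n)) ^ ((1 : ℝ) / (n : ℝ)))
          Filter.atTop =
        Filter.limsup (fun n : ℕ =>
          (hybridOpNorm H (convPow f n)) ^ ((1 : ℝ) / (n : ℝ))) Filter.atTop :=
  fun f => le_antisymm (limsup_rpow_l1Norm_convPow_le H hfin hsym hgen hsub f)
    (limsup_rpow_hybridOpNorm_convPow_le H f)
end

section
/- Let G be a group generated by a finite symmetric set S with word length ℓ, let K ⊴ G be a normal subgroup of G, and let H ≤ G be a subgroup with K ≤ H. If the pair (G,H) has the rapid decay property, then the pair (G/K, H/K) has the rapid decay property, where G/K is generated by the image of S with its associated word length, and H/K is the image of H in G/K. -/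
open scoped BigOperators

attribute [local instance] Classical.propDecidable

/-!
Lift functions on `G/K` to `G` along a section of the quotient map that picks lifts of minimal
word length, so that the lift of a function supported in a ball is supported in the ball of
the same radius. Since `K ≤ H`, left cosets of `H` in `G` correspond bijectively to left cosets
of `H/K` in `G/K`, hence the lift preserves `(2,1)`-norms. Pushing forward along the quotient
map turns convolution on `G` into convolution on `G/K` and, by the triangle inequality, does not
increase the `(2,1)`-norm; so the rapid decay inequality for the lifts descends to `G/K`.
-/

open Finsupp Function

section Norms

variable {α β E F : Type*} [NormedAddCommGroup E] [NormedAddCommGroup F]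

lemma norm_mapDomain_apply_le (p : α → β) (u : α →₀ E) (b : β) :
    ‖mapDomain p u b‖ ≤ mapDomain p (u.mapRange norm norm_zero) b := by
  rw [mapDomain, mapDomain, sum_mapRange_index (by simp), Finsupp.sum_apply, Finsupp.sum_apply]
  refine (norm_sum_le _ _).trans (Finset.sum_le_sum fun a _ => ?_)
  simp only [single_apply]
  split_ifs <;> simp

lemma l2Norm_le_of_norm_le_s12 {u : α →₀ E} {v : α →₀ F} (h : ∀ a, ‖u a‖ ≤ ‖v a‖) :
    l2Norm u ≤ l2Norm v := by
  have hsupp : u.support ⊆ v.support := fun a ha => by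
    rw [mem_support_iff, ← norm_pos_iff] at ha ⊢
    exact ha.trans_le (h a)
  refine Real.sqrt_le_sqrt ?_
  calc ∑ a ∈ u.support, ‖u a‖ ^ 2
      ≤ ∑ a ∈ u.support, ‖v a‖ ^ 2 := by gcongr with a; exact h a
    _ ≤ ∑ a ∈ v.support, ‖v a‖ ^ 2 := Finset.sum_le_sum_of_subset_of_nonneg hsupp (by simp)

lemma l2Norm_mapDomain_of_injective {e : α → β} (he : Injective e) (u : α →₀ E) :
    l2Norm (mapDomain e u) = l2Norm u := by
  rw [l2Norm, l2Norm, mapDomain_support_of_injective he, Finset.sum_image he.injOn]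
  simp only [mapDomain_apply he]

lemma mapRange_norm_mapDomain_of_injective {e : α → β} (he : Injective e) (u : α →₀ E) :
    (mapDomain e u).mapRange norm norm_zero = mapDomain e (u.mapRange norm norm_zero) := by
  ext b
  by_cases hb : b ∈ Set.range e
  · obtain ⟨a, rfl⟩ := hb
    simp only [mapRange_apply, mapDomain_apply he]
  · simp only [mapRange_apply, mapDomain_of_notMem_range _ _ hb, norm_zero]

end Norms

section Convolution

variable {G Q k : Type*} [Group G] [Group Q] [Semiring k]

lemma conv_eq_coeff_mul (f ϕ : G →₀ k) :
    conv f ϕ = (MonoidAlgebra.ofCoeff f * MonoidAlgebra.ofCoeff ϕ).coeff := by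
  rw [MonoidAlgebra.mul_def, conv, Finsupp.sum, Finsupp.sum, MonoidAlgebra.coeff_sum]
  refine Finset.sum_congr rfl fun z _ => ?_
  rw [Finsupp.sum, MonoidAlgebra.coeff_sum, mapDomain, Finsupp.smul_sum, Finsupp.sum]
  refine Finset.sum_congr rfl fun a _ => ?_
  rw [smul_single, smul_eq_mul, MonoidAlgebra.coeff_single]

lemma mapDomain_conv (π : G →* Q) (f ϕ : G →₀ k) :
    mapDomain π (conv f ϕ) = conv (mapDomain π f) (mapDomain π ϕ) := by
  rw [conv_eq_coeff_mul, conv_eq_coeff_mul]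
  exact congrArg MonoidAlgebra.coeff (MonoidAlgebra.mapDomain_mul π (.ofCoeff f) (.ofCoeff ϕ))

end Convolution

section CosetMap

variable {G Q E : Type*} [Group G] [Group Q] [NormedAddCommGroup E] (π : G →* Q) (H : Subgroup G)

def cosetMap : G ⧸ H → Q ⧸ H.map π :=
  Quotient.map' π fun a b hab => QuotientGroup.leftRel_apply.mpr <| by
    rw [← map_inv, ← map_mul]
    exact Subgroup.mem_map_of_mem π (QuotientGroup.leftRel_apply.mp hab)

@[simp]
lemma cosetMap_mk (g : G) : cosetMap π H g = (π g : Q ⧸ H.map π) := rfl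

variable {π H}

lemma cosetMap_injective (hker : π.ker ≤ H) : Injective (cosetMap π H) := by
  intro a b
  induction a using QuotientGroup.induction_on with | H a =>
  induction b using QuotientGroup.induction_on with | H b =>
  intro hab
  rw [cosetMap_mk, cosetMap_mk, QuotientGroup.eq, ← map_inv, ← map_mul,
    ← Subgroup.mem_comap, Subgroup.comap_map_eq, sup_eq_left.mpr hker] at hab
  exact QuotientGroup.eq.mpr hab

lemma l2Norm_mapDomain_mk_mapDomain (hker : π.ker ≤ H) (u : G →₀ E) :
    l2Norm (mapDomain (QuotientGroup.mk : Q → Q ⧸ H.map π) (mapDomain π u)) =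
      l2Norm (mapDomain (QuotientGroup.mk : G → G ⧸ H) u) := by
  have hcomm : (QuotientGroup.mk : Q → Q ⧸ H.map π) ∘ π = cosetMap π H ∘ QuotientGroup.mk :=
    rfl
  rw [← mapDomain_comp, hcomm, mapDomain_comp, l2Norm_mapDomain_of_injective
    (cosetMap_injective hker)]

lemma l21Norm_mapDomain_le (hker : π.ker ≤ H) (Ψ : G →₀ E) :
    l21Norm (H.map π) (mapDomain π Ψ) ≤ l21Norm H Ψ := by
  rw [l21Norm, l21Norm, ← l2Norm_mapDomain_mk_mapDomain hker]
  have hle : (mapDomain π Ψ).mapRange norm norm_zero ≤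
      mapDomain π (Ψ.mapRange norm norm_zero) := fun q => norm_mapDomain_apply_le π Ψ q
  have hnonneg : 0 ≤ (mapDomain π Ψ).mapRange norm norm_zero := fun q => norm_nonneg _
  refine l2Norm_le_of_norm_le_s12 fun c => ?_
  rw [Real.norm_of_nonneg (mapDomain_nonneg hnonneg c),
    Real.norm_of_nonneg (mapDomain_nonneg (hnonneg.trans hle) c)]
  exact mapDomain_mono hle c

lemma l21Norm_mapDomain_of_rightInverse (hker : π.ker ≤ H) {s : Q → G}
    (hs : RightInverse s π) (f : Q →₀ E) :
    l21Norm H (mapDomain s f) = l21Norm (H.map π) f := by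
  rw [l21Norm, l21Norm, mapRange_norm_mapDomain_of_injective hs.injective,
    ← l2Norm_mapDomain_mk_mapDomain hker, ← mapDomain_comp (f := s), hs.comp_eq_id, mapDomain_id]

end CosetMap

section WordLength

variable {G Q : Type*} [Group G] [Group Q]

lemma List.exists_map_eq_of_forall_mem_image {α β : Type*} (p : α → β) {S : Set α}
    {l' : List β} (h : ∀ b ∈ l', b ∈ p '' S) : ∃ l : List α, (∀ a ∈ l, a ∈ S) ∧ l.map p = l' := by
  induction l' with
  | nil => exact ⟨[], by simp, rfl⟩
  | cons b l' ih =>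
    obtain ⟨a, ha, rfl⟩ := h b List.mem_cons_self
    obtain ⟨l, hl, rfl⟩ := ih fun x hx => h x (List.mem_cons_of_mem _ hx)
    exact ⟨a :: l, List.forall_mem_cons.mpr ⟨ha, hl⟩, rfl⟩

/- If `π g` is not a product of elements of `π '' S`, neither is `g` one of elements of `S`, and
both word lengths take the junk value `sInf ∅ = 0`. -/
lemma exists_wordLength_le_of_surjective (π : G →* Q) (hπ : Surjective π) (S : Set G) (q : Q) :
    ∃ g, π g = q ∧ wordLength S g ≤ wordLength (π '' S) q := by
  obtain ⟨g, rfl⟩ := hπ q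
  unfold wordLength
  set T := {n | ∃ l : List Q, (∀ s ∈ l, s ∈ π '' S) ∧ l.length = n ∧ l.prod = π g}
  rcases T.eq_empty_or_nonempty with hT | hT
  · refine ⟨g, rfl, (Nat.sInf_eq_zero.mpr (Or.inr ?_)).trans_le (Nat.zero_le _)⟩
    refine Set.eq_empty_of_forall_notMem fun n ⟨l, hlS, hlen, hprod⟩ => ?_
    refine Set.eq_empty_iff_forall_notMem.mp hT n
      ⟨l.map π, ?_, by simp [hlen], by rw [← map_list_prod, hprod]⟩
    simpa using fun a ha => ⟨a, hlS a ha, rfl⟩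
  · obtain ⟨l', hl'S, hlen, hprod⟩ := Nat.sInf_mem hT
    obtain ⟨l, hlS, rfl⟩ := List.exists_map_eq_of_forall_mem_image π hl'S
    exact ⟨l.prod, by rw [map_list_prod, hprod], Nat.sInf_le ⟨l, hlS, by simpa using hlen, rfl⟩⟩

end WordLength

theorem PairRD.map {G Q : Type*} [Group G] [Group Q] {S : Set G} {H : Subgroup G}
    (hRD : PairRD S H) (π : G →* Q) (hπ : Surjective π) (hker : π.ker ≤ H) :
    PairRD (π '' S) (H.map π) := by
  obtain ⟨C, D, hC, hRD⟩ := hRD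
  choose s hs hlen using exists_wordLength_le_of_surjective π hπ S
  have hsec : RightInverse s π := hs
  refine ⟨C, D, hC, fun R f ϕ hf => ?_⟩
  have hF : supportedInBall S R (mapDomain s f) := fun x hx => by
    obtain ⟨q, hq, rfl⟩ := Finset.mem_image.mp (mapDomain_support hx)
    exact (hlen q).trans (hf q hq)
  have hpush (u : Q →₀ ℂ) : mapDomain π (mapDomain s u) = u := by
    rw [← mapDomain_comp, hsec.comp_eq_id, mapDomain_id]
  calc l21Norm (H.map π) (conv f ϕ)
      = l21Norm (H.map π) (mapDomain π (conv (mapDomain s f) (mapDomain s ϕ))) := by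
        rw [mapDomain_conv, hpush, hpush]
    _ ≤ l21Norm H (conv (mapDomain s f) (mapDomain s ϕ)) := l21Norm_mapDomain_le hker _
    _ ≤ C * ((R : ℝ) + 1) ^ D * l21Norm H (mapDomain s f) * l21Norm H (mapDomain s ϕ) :=
        hRD R _ _ hF
    _ = C * ((R : ℝ) + 1) ^ D * l21Norm (H.map π) f * l21Norm (H.map π) ϕ := by
        simp only [l21Norm_mapDomain_of_rightInverse hker hsec]

theorem statement12_general {G : Type*} [Group G] (S : Set G)
    (K : Subgroup G) [K.Normal] (H : Subgroup G) (hKH : K ≤ H)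
    (hRD : PairRD S H) :
    PairRD ((QuotientGroup.mk : G → G ⧸ K) '' S)
      (H.map (QuotientGroup.mk' K)) :=
  hRD.map (QuotientGroup.mk' K) (QuotientGroup.mk'_surjective K) (by rwa [QuotientGroup.ker_mk'])

/-- if `K ⊴ G` is a normal subgroup contained in the subgroup `H`
and the pair `(G,H)` has rapid decay, then so does the pair `(G/K, H/K)`. -/
theorem statement12 {G : Type*} [Group G] (S : Set G) (hfin : S.Finite)
    (hsym : ∀ s ∈ S, s⁻¹ ∈ S) (hgen : Subgroup.closure S = ⊤)
    (K : Subgroup G) [K.Normal] (H : Subgroup G) (hKH : K ≤ H)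
    (hRD : PairRD S H) :
    PairRD ((QuotientGroup.mk : G → G ⧸ K) '' S)
      (H.map (QuotientGroup.mk' K)) :=
  statement12_general S K H hKH hRD
end

section
/- Let G and Γ be groups generated by finite symmetric sets, H ≤ G and Λ ≤ Γ subgroups, and suppose the pairs (G,H) and (Γ,Λ) both have the rapid decay property. If one of the following holds: G/H has polynomial growth, Γ/Λ has polynomial growth, H has polynomial growth for the length induced by G, or Λ has polynomial growth for the length induced by Γ, then the pair (G×Γ, H×Λ) has the rapid decay property, where G×Γ is generated by the finite symmetric set (S×{e}) ∪ ({e}×T) with S, T the generating sets of G and Γ. -/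
open scoped BigOperators

attribute [local instance] Classical.propDecidable

/-! Taking absolute values, `|F * Φ|` is dominated by `|F| * |Φ|`, and the coset sums of a
convolution over `(G ⧸ H) × (Γ ⧸ Λ)` are obtained by letting `|F|` act on the coset sums of `|Φ|`.
Slicing along `Γ`, the triangle inequality bounds this action by the action on `Γ ⧸ Λ` of any
weight `m` on `Γ` dominating the operator norms of the slices `|F|(·, w)` on `ℓ²(G ⧸ H)`, and the
rapid decay of `(Γ, Λ)` bounds the latter by the `(2,1)`-norm of `m`.

If `G ⧸ H` has polynomial growth, take for `m w` the `ℓ¹`-norm of the slice; by Cauchy–Schwarz,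
`‖m‖_{(2,1)} ≤ √N · ‖F‖_{(2,1)}` where `N` is the number of cosets of `H` meeting the ball `B(R)`.
If `Λ` has polynomial growth, take for `m` the bound given by the rapid decay of `(G, H)`; now
Cauchy–Schwarz runs over the points of `B(R)` in one coset of `Λ`, and there are at most
`|Λ ∩ B(2R)|` of them. The two remaining cases follow by exchanging the factors. -/

namespace RapidDecay

open Finsupp

section L2

variable {α β ι : Type*}

theorem l2Norm_nonneg (f : α →₀ ℝ) : 0 ≤ l2Norm f := Real.sqrt_nonneg _

theorem sq_l2Norm_eq_sum (f : α →₀ ℝ) {A : Finset α} (hA : f.support ⊆ A) :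
    l2Norm f ^ 2 = ∑ x ∈ A, f x ^ 2 := by
  rw [l2Norm, Real.sq_sqrt (Finset.sum_nonneg fun _ _ => sq_nonneg _)]
  simp only [Real.norm_eq_abs, sq_abs]
  exact Finset.sum_subset hA fun x _ hx => by simp [notMem_support_iff.mp hx]

theorem sum_sq_le_sq_l2Norm (f : α →₀ ℝ) (A : Finset α) : ∑ x ∈ A, f x ^ 2 ≤ l2Norm f ^ 2 := by
  rw [sq_l2Norm_eq_sum f (Finset.subset_union_right (s₁ := A))]
  exact Finset.sum_le_sum_of_subset_of_nonneg Finset.subset_union_left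
    fun _ _ _ => sq_nonneg _

theorem l2Norm_le_mul_of_sq_le {f : α →₀ ℝ} {g : β →₀ ℝ} {c : ℝ} (hc : 0 ≤ c)
    (h : l2Norm f ^ 2 ≤ c ^ 2 * l2Norm g ^ 2) : l2Norm f ≤ c * l2Norm g := by
  rw [← mul_pow] at h
  exact (pow_le_pow_iff_left₀ (l2Norm_nonneg f) (mul_nonneg hc (l2Norm_nonneg g)) two_ne_zero).1 h

theorem l2Norm_mono {f g : α →₀ ℝ} (hf : 0 ≤ f) (hfg : f ≤ g) : l2Norm f ≤ l2Norm g := by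
  have hA := sq_l2Norm_eq_sum f (Finset.subset_union_left (s₂ := g.support))
  have hB := sq_l2Norm_eq_sum g (Finset.subset_union_right (s₁ := f.support))
  simpa using l2Norm_le_mul_of_sq_le zero_le_one (f := f) (g := g) (by
    rw [hA, hB, one_pow, one_mul]
    exact Finset.sum_le_sum fun x _ => pow_le_pow_left₀ (hf x) (hfg x) 2)

theorem sum_mul_le_l2Norm_mul_l2Norm (f g : α →₀ ℝ) (A : Finset α) :
    ∑ x ∈ A, f x * g x ≤ l2Norm f * l2Norm g := by
  refine (le_abs_self _).trans
    (abs_le_of_sq_le_sq ?_ (mul_nonneg (l2Norm_nonneg f) (l2Norm_nonneg g)))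
  calc (∑ x ∈ A, f x * g x) ^ 2 ≤ (∑ x ∈ A, f x ^ 2) * ∑ x ∈ A, g x ^ 2 :=
        Finset.sum_mul_sq_le_sq_mul_sq A f g
    _ ≤ l2Norm f ^ 2 * l2Norm g ^ 2 :=
        mul_le_mul (sum_sq_le_sq_l2Norm f A) (sum_sq_le_sq_l2Norm g A)
          (Finset.sum_nonneg fun _ _ => sq_nonneg _) (sq_nonneg _)
    _ = (l2Norm f * l2Norm g) ^ 2 := (mul_pow _ _ _).symm

theorem l2Norm_add_le (f g : α →₀ ℝ) : l2Norm (f + g) ≤ l2Norm f + l2Norm g := by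
  set A := f.support ∪ g.support
  have hsq : l2Norm (f + g) ^ 2 ≤ (l2Norm f + l2Norm g) ^ 2 := by
    rw [sq_l2Norm_eq_sum (f + g) (support_add : (f + g).support ⊆ A), add_sq,
      sq_l2Norm_eq_sum f (Finset.subset_union_left : f.support ⊆ A),
      sq_l2Norm_eq_sum g (Finset.subset_union_right : g.support ⊆ A)]
    simp only [coe_add, Pi.add_apply, add_sq, Finset.sum_add_distrib, mul_assoc,
      ← Finset.mul_sum]
    linarith [sum_mul_le_l2Norm_mul_l2Norm f g A]
  exact (pow_le_pow_iff_left₀ (l2Norm_nonneg _)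
    (add_nonneg (l2Norm_nonneg f) (l2Norm_nonneg g)) two_ne_zero).1 hsq

theorem l2Norm_sum_le (s : Finset ι) (v : ι → α →₀ ℝ) :
    l2Norm (∑ i ∈ s, v i) ≤ ∑ i ∈ s, l2Norm (v i) :=
  Finset.le_sum_of_subadditive l2Norm (by simp [l2Norm]) l2Norm_add_le s v

theorem l2Norm_smul (c : ℝ) (f : α →₀ ℝ) : l2Norm (c • f) = |c| * l2Norm f := by
  refine (pow_left_inj₀ (l2Norm_nonneg _) (by positivity [l2Norm_nonneg f]) two_ne_zero).1 ?_
  rw [sq_l2Norm_eq_sum _ support_smul, mul_pow, sq_abs, sq_l2Norm_eq_sum f subset_rfl,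
    Finset.mul_sum]
  simp [mul_pow]

theorem l2Norm_mapDomain_of_injective {π : α → β} (hπ : π.Injective) (f : α →₀ ℝ) :
    l2Norm (f.mapDomain π) = l2Norm f := by
  refine (pow_left_inj₀ (l2Norm_nonneg _) (l2Norm_nonneg _) two_ne_zero).1 ?_
  rw [sq_l2Norm_eq_sum _ mapDomain_support, sq_l2Norm_eq_sum f subset_rfl,
    Finset.sum_image hπ.injOn]
  simp [mapDomain_apply hπ]

end L2

section ActConv

variable {G X Y k : Type*} [Group G] [MulAction G X]

noncomputable def actConv [Semiring k] (f : G →₀ k) (p : X →₀ k) : X →₀ k :=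
  f.sum fun z c => c • p.mapDomain (z • ·)

theorem conv_eq_actConv [Semiring k] (f ϕ : G →₀ k) : conv f ϕ = actConv f ϕ := rfl

theorem mapDomain_smul_left_apply [AddCommMonoid k] (z : G) (p : X →₀ k) (x : X) :
    p.mapDomain (z • ·) x = p (z⁻¹ • x) :=
  mapDomain_equiv_apply (f := MulAction.toPerm z) p x

theorem actConv_apply_of_subset [Semiring k] (f : G →₀ k) (p : X →₀ k) {A : Finset G}
    (hA : f.support ⊆ A) (x : X) : actConv f p x = ∑ z ∈ A, f z * p (z⁻¹ • x) := by
  rw [actConv, Finsupp.sum_apply, Finsupp.sum,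
    ← Finset.sum_subset hA fun z _ hz => by simp [notMem_support_iff.mp hz]]
  simp only [Finsupp.smul_apply, smul_eq_mul, mapDomain_smul_left_apply]

theorem actConv_nonneg {f : G →₀ ℝ} {p : X →₀ ℝ} (hf : 0 ≤ f) (hp : 0 ≤ p) :
    0 ≤ actConv f p := fun x => by
  rw [actConv_apply_of_subset f p subset_rfl]
  exact Finset.sum_nonneg fun z _ => mul_nonneg (hf z) (hp _)

theorem mapDomain_actConv [Semiring k] [MulAction G Y] {π : X → Y}
    (hπ : ∀ (g : G) (x : X), π (g • x) = g • π x) (f : G →₀ k) (p : X →₀ k) :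
    (actConv f p).mapDomain π = actConv f (p.mapDomain π) := by
  rw [actConv, actConv, ← mapDomain.addMonoidHom_apply, map_finsuppSum]
  refine Finsupp.sum_congr fun z _ => ?_
  rw [mapDomain.addMonoidHom_apply, mapDomain_smul, ← mapDomain_comp, ← mapDomain_comp]
  congr 2
  exact funext fun x => hπ z x

theorem l2Norm_actConv_le (f : G →₀ ℝ) (p : X →₀ ℝ) :
    l2Norm (actConv f p) ≤ l1Norm f * l2Norm p := by
  rw [actConv, Finsupp.sum, l1Norm, Finset.sum_mul]
  refine (l2Norm_sum_le _ _).trans (Finset.sum_le_sum fun z _ => ?_)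
  rw [l2Norm_smul, l2Norm_mapDomain_of_injective (MulAction.injective z), Real.norm_eq_abs]

end ActConv

section Complex

variable {α G : Type*} [Group G]

noncomputable def normFun (f : α →₀ ℂ) : α →₀ ℝ := f.mapRange norm norm_zero

theorem normFun_apply (f : α →₀ ℂ) (x : α) : normFun f x = ‖f x‖ := rfl

theorem normFun_nonneg (f : α →₀ ℂ) : 0 ≤ normFun f := fun x => norm_nonneg (f x)

theorem support_normFun (f : α →₀ ℂ) : (normFun f).support = f.support :=
  Finset.ext fun x => by simp [normFun_apply]

theorem normFun_conv_le (f ϕ : G →₀ ℂ) : normFun (conv f ϕ) ≤ conv (normFun f) (normFun ϕ) :=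
  fun x => by
    rw [normFun_apply, conv_eq_actConv, conv_eq_actConv, actConv_apply_of_subset _ _ subset_rfl,
      actConv_apply_of_subset _ _ (support_normFun f).le]
    refine (norm_sum_le _ _).trans_eq (Finset.sum_congr rfl fun z _ => ?_)
    rw [norm_mul, normFun_apply, normFun_apply]

theorem toC_apply (f : α →₀ ℝ) (x : α) : toC f x = f x := rfl

theorem support_toC (f : α →₀ ℝ) : (toC f).support = f.support :=
  Finset.ext fun x => by simp [toC_apply]

theorem normFun_toC {f : α →₀ ℝ} (hf : 0 ≤ f) : normFun (toC f) = f :=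
  Finsupp.ext fun x => by
    rw [normFun_apply, toC_apply, Complex.norm_real, Real.norm_of_nonneg (hf x)]

theorem toC_conv (f ϕ : G →₀ ℝ) : toC (conv f ϕ) = conv (toC f) (toC ϕ) :=
  Finsupp.ext fun x => by
    simp only [toC_apply, conv_eq_actConv, actConv_apply_of_subset _ _ (support_toC f).le,
      actConv_apply_of_subset _ _ subset_rfl, Complex.ofReal_sum, Complex.ofReal_mul]

end Complex

section Quotient

variable {G : Type*} [Group G]

noncomputable def cosetSum (H : Subgroup G) (f : G →₀ ℝ) : G ⧸ H →₀ ℝ :=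
  f.mapDomain QuotientGroup.mk

theorem l21Norm_eq (H : Subgroup G) (f : G →₀ ℂ) :
    l21Norm H f = l2Norm (cosetSum H (normFun f)) := rfl

theorem l21Norm_toC (H : Subgroup G) {f : G →₀ ℝ} (hf : 0 ≤ f) :
    l21Norm H (toC f) = l2Norm (cosetSum H f) := by
  rw [l21Norm_eq, normFun_toC hf]

-- Test functions on `G ⧸ H` are lifted to `G` along a section of the projection.
theorem PairRD.exists_l2Norm_actConv_le {S : Set G} {H : Subgroup G} (h : PairRD S H) :
    ∃ C : ℝ, ∃ D : ℕ, 0 ≤ C ∧ ∀ (R : ℕ) (m : G →₀ ℝ) (p : G ⧸ H →₀ ℝ), 0 ≤ m → 0 ≤ p →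
      supportedInBall S R m → l2Norm (actConv m p) ≤
        C * ((R : ℝ) + 1) ^ D * l2Norm (cosetSum H m) * l2Norm p := by
  obtain ⟨C, D, hC, hRD⟩ := h
  refine ⟨C, D, hC, fun R m p hm hp hmR => ?_⟩
  set a : G →₀ ℝ := p.mapDomain Quotient.out
  have ha : cosetSum H a = p := by
    rw [cosetSum, ← mapDomain_comp,
      show QuotientGroup.mk ∘ Quotient.out = id from funext Quotient.out_eq, mapDomain_id]
  have hae : 0 ≤ a := mapDomain_nonneg hp
  have := hRD R (toC m) (toC a) (by rwa [supportedInBall, support_toC])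
  rwa [← toC_conv, l21Norm_toC H (conv_eq_actConv m a ▸ actConv_nonneg hm hae), l21Norm_toC H hm,
    l21Norm_toC H hae, ha, conv_eq_actConv, cosetSum, mapDomain_actConv (fun _ _ => rfl),
    ← cosetSum, ha] at this

end Quotient

theorem mapDomain_apply_eq_sum_filter {α β : Type*} (π : α → β) (f : α →₀ ℝ) {A : Finset α}
    (hA : f.support ⊆ A) (b : β) : f.mapDomain π b = ∑ x ∈ A with π x = b, f x := by
  rw [mapDomain, Finsupp.sum_apply, Finsupp.sum, Finset.sum_filter,
    ← Finset.sum_subset hA fun x _ hx => by simp [notMem_support_iff.mp hx]]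
  simp only [single_apply]

section Slice

variable {X X' Y Y' : Type*}

noncomputable def slice (P : X × Y →₀ ℝ) (y : Y) : X →₀ ℝ :=
  P.comapDomain (·, y) (Prod.mk_left_injective y).injOn

theorem slice_apply (P : X × Y →₀ ℝ) (y : Y) (x : X) : slice P y x = P (x, y) :=
  comapDomain_apply _ _ _ _

theorem slice_nonneg {P : X × Y →₀ ℝ} (hP : 0 ≤ P) (y : Y) : 0 ≤ slice P y :=
  fun x => hP (x, y)

theorem support_slice_subset (P : X × Y →₀ ℝ) (y : Y) :
    (slice P y).support ⊆ P.support.image Prod.fst := fun x hx =>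
  Finset.mem_image.2 ⟨(x, y), by simpa [slice_apply] using hx, rfl⟩

theorem slice_eq_zero {P : X × Y →₀ ℝ} {y : Y} (hy : y ∉ P.support.image Prod.snd) :
    slice P y = 0 :=
  Finsupp.ext fun x => by
    rw [slice_apply, Finsupp.zero_apply, ← notMem_support_iff]
    exact fun h => hy (Finset.mem_image_of_mem Prod.snd h)

theorem sum_sq_l2Norm_slice (P : X × Y →₀ ℝ) {B : Finset Y}
    (hB : P.support.image Prod.snd ⊆ B) : ∑ y ∈ B, l2Norm (slice P y) ^ 2 = l2Norm P ^ 2 := by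
  rw [sq_l2Norm_eq_sum P (Finset.subset_product.trans (Finset.product_subset_product_right hB)),
    Finset.sum_product_right]
  exact Finset.sum_congr rfl fun y _ => by
    rw [sq_l2Norm_eq_sum _ (support_slice_subset P y)]
    simp only [slice_apply]

noncomputable def sliceNorms (P : X × Y →₀ ℝ) : Y →₀ ℝ :=
  onFinset (P.support.image Prod.snd) (fun y => l2Norm (slice P y)) fun y hy => by
    by_contra h
    simp [slice_eq_zero h, l2Norm] at hy

theorem sliceNorms_apply (P : X × Y →₀ ℝ) (y : Y) : sliceNorms P y = l2Norm (slice P y) := rfl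

theorem sliceNorms_nonneg (P : X × Y →₀ ℝ) : 0 ≤ sliceNorms P := fun _ => l2Norm_nonneg _

theorem support_sliceNorms_subset (P : X × Y →₀ ℝ) :
    (sliceNorms P).support ⊆ P.support.image Prod.snd :=
  support_onFinset_subset

theorem l2Norm_sliceNorms (P : X × Y →₀ ℝ) : l2Norm (sliceNorms P) = l2Norm P := by
  refine (pow_left_inj₀ (l2Norm_nonneg _) (l2Norm_nonneg _) two_ne_zero).1 ?_
  rw [sq_l2Norm_eq_sum _ (support_sliceNorms_subset P), ← sum_sq_l2Norm_slice P subset_rfl]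
  rfl

theorem slice_mapDomain_prodMap (π : X → X') (q : Y → Y') (P : X × Y →₀ ℝ) (y' : Y') :
    slice (P.mapDomain (Prod.map π q)) y' =
      ∑ y ∈ P.support.image Prod.snd with q y = y', (slice P y).mapDomain π := by
  ext x'
  rw [slice_apply, Finsupp.finsetSum_apply,
    mapDomain_apply_eq_sum_filter _ _ Finset.subset_product, Finset.sum_filter,
    Finset.sum_product_right, Finset.sum_filter]
  refine Finset.sum_congr rfl fun y _ => ?_
  rw [mapDomain_apply_eq_sum_filter _ _ (support_slice_subset P y), Finset.sum_filter]
  split_ifs with hy <;> simp [slice_apply, Prod.ext_iff, hy]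

theorem mapDomain_snd_apply (P : X × Y →₀ ℝ) {A : Finset X} (hA : ∀ x ∈ P.support, x.1 ∈ A)
    (y : Y) : P.mapDomain Prod.snd y = ∑ x ∈ A, P (x, y) := by
  rw [mapDomain_apply_eq_sum_filter _ _ (A := A ×ˢ P.support.image Prod.snd) fun x hx =>
      Finset.mem_product.2 ⟨hA x hx, Finset.mem_image_of_mem _ hx⟩,
    Finset.sum_filter, Finset.sum_product]
  refine Finset.sum_congr rfl fun x _ => ?_
  rw [Finset.sum_ite_eq']
  split_ifs with hy
  · rfl
  · rw [← slice_apply, slice_eq_zero hy, Finsupp.zero_apply]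

theorem slice_mapDomain_prodMap_id (π : X → X') (P : X × Y →₀ ℝ) (y : Y) :
    slice (P.mapDomain (Prod.map π id)) y = (slice P y).mapDomain π := by
  rw [slice_mapDomain_prodMap, Finset.sum_filter]
  simp only [id, Finset.sum_ite_eq']
  split_ifs with hy
  · rfl
  · rw [slice_eq_zero hy, mapDomain_zero]

theorem l1Norm_slice {P : X × Y →₀ ℝ} (hP : 0 ≤ P) (y : Y) :
    l1Norm (slice P y) = P.mapDomain Prod.snd y := by
  rw [mapDomain_snd_apply P fun x hx => Finset.mem_image_of_mem _ hx, l1Norm,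
    Finset.sum_subset (support_slice_subset P y) fun x _ hx => by
      rw [notMem_support_iff] at hx
      simpa [slice_apply] using hx]
  exact Finset.sum_congr rfl fun x _ => by rw [slice_apply, Real.norm_of_nonneg (hP _)]

end Slice

section Fibres

variable {α X Y W : Type*}

theorem sum_sq_l2Norm_le_sq_l2Norm_sum {ι : Type*} (s : Finset ι) {f : ι → α →₀ ℝ}
    (hf : ∀ i ∈ s, 0 ≤ f i) : ∑ i ∈ s, l2Norm (f i) ^ 2 ≤ l2Norm (∑ i ∈ s, f i) ^ 2 := by
  rw [sq_l2Norm_eq_sum _ support_finsetSum,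
    Finset.sum_congr rfl fun i hi =>
      sq_l2Norm_eq_sum (f i) (Finset.subset_biUnion_of_mem (fun i => (f i).support) hi),
    Finset.sum_comm]
  refine Finset.sum_le_sum fun x _ => ?_
  rw [Finsupp.finsetSum_apply]
  exact Finset.sum_sq_le_sq_sum_of_nonneg fun i hi => hf i hi x

theorem l2Norm_mapDomain_snd_le (M : X × Y →₀ ℝ) {A : Finset X} (hA : ∀ x ∈ M.support, x.1 ∈ A) :
    l2Norm (M.mapDomain Prod.snd) ≤ √(A.card : ℝ) * l2Norm M := by
  refine l2Norm_le_mul_of_sq_le (Real.sqrt_nonneg _) ?_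
  rw [Real.sq_sqrt (Nat.cast_nonneg _), sq_l2Norm_eq_sum _ mapDomain_support,
    ← sum_sq_l2Norm_slice M subset_rfl, Finset.mul_sum]
  refine Finset.sum_le_sum fun y _ => ?_
  rw [mapDomain_snd_apply M hA, sq_l2Norm_eq_sum _ (A := A) fun x hx =>
    by simpa [slice_apply] using hA (x, y) (by simpa [slice_apply] using hx)]
  simpa only [slice_apply] using sq_sum_le_card_mul_sum_sq

theorem l2Norm_mapDomain_sliceNorms_le {N : X × W →₀ ℝ} (hN : 0 ≤ N) (q : W → Y) {ν : ℕ}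
    (hν : ∀ y, ((N.support.image Prod.snd).filter (q · = y)).card ≤ ν) :
    l2Norm ((sliceNorms N).mapDomain q) ≤ √(ν : ℝ) * l2Norm (N.mapDomain (Prod.map id q)) := by
  set B := N.support.image Prod.snd
  have hsupp : ((sliceNorms N).mapDomain q).support ⊆ B.image q :=
    mapDomain_support.trans (Finset.image_subset_image (support_sliceNorms_subset N))
  have hsuppM : (N.mapDomain (Prod.map id q)).support.image Prod.snd ⊆ B.image q := by
    intro y hy
    obtain ⟨x, hx, rfl⟩ := Finset.mem_image.1 hy
    obtain ⟨x', hx', rfl⟩ := Finset.mem_image.1 (mapDomain_support hx)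
    exact Finset.mem_image_of_mem q (Finset.mem_image_of_mem Prod.snd hx')
  refine l2Norm_le_mul_of_sq_le (Real.sqrt_nonneg _) ?_
  rw [Real.sq_sqrt (Nat.cast_nonneg _), sq_l2Norm_eq_sum _ hsupp,
    ← sum_sq_l2Norm_slice _ hsuppM, Finset.mul_sum]
  refine Finset.sum_le_sum fun y _ => ?_
  rw [mapDomain_apply_eq_sum_filter _ _ (support_sliceNorms_subset N), slice_mapDomain_prodMap]
  simp only [mapDomain_id, sliceNorms_apply]
  calc (∑ w ∈ B with q w = y, l2Norm (slice N w)) ^ 2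
      ≤ ((B.filter (q · = y)).card : ℝ) * ∑ w ∈ B with q w = y, l2Norm (slice N w) ^ 2 :=
        sq_sum_le_card_mul_sum_sq
    _ ≤ ν * l2Norm (∑ w ∈ B with q w = y, slice N w) ^ 2 :=
        mul_le_mul (by exact_mod_cast hν y)
          (sum_sq_l2Norm_le_sq_l2Norm_sum _ fun w _ => slice_nonneg hN w)
          (Finset.sum_nonneg fun _ _ => sq_nonneg _) (Nat.cast_nonneg _)

end Fibres

section ProductAction

variable {G Γ X Y : Type*} [Group G] [Group Γ] [MulAction G X] [MulAction Γ Y]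

-- Only a local instance: globally it would compete with the action of `G × Γ` on itself.
abbrev prodMulAction : MulAction (G × Γ) (X × Y) where
  smul g x := (g.1 • x.1, g.2 • x.2)
  one_smul x := Prod.ext (one_smul G x.1) (one_smul Γ x.2)
  mul_smul g h x := Prod.ext (mul_smul g.1 h.1 x.1) (mul_smul g.2 h.2 x.2)

attribute [local instance] prodMulAction

theorem prod_smul_def (g : G × Γ) (x : X × Y) : g • x = (g.1 • x.1, g.2 • x.2) := rfl

theorem slice_actConv (F : G × Γ →₀ ℝ) (P : X × Y →₀ ℝ) {W : Finset Γ}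
    (hW : F.support.image Prod.snd ⊆ W) (y : Y) :
    slice (actConv F P) y = ∑ w ∈ W, actConv (slice F w) (slice P (w⁻¹ • y)) := by
  ext x
  rw [slice_apply, Finsupp.finsetSum_apply, actConv_apply_of_subset _ _
      (Finset.subset_product.trans (Finset.product_subset_product_right hW)),
    Finset.sum_product_right]
  refine Finset.sum_congr rfl fun w _ => ?_
  rw [actConv_apply_of_subset _ _ (support_slice_subset F w)]
  simp only [slice_apply, prod_smul_def, Prod.inv_mk]

theorem l2Norm_actConv_prod_le (F : G × Γ →₀ ℝ) {P : X × Y →₀ ℝ} (hP : 0 ≤ P) (m : Γ →₀ ℝ)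
    {K : ℝ} (hslice : ∀ w (p : X →₀ ℝ), 0 ≤ p → l2Norm (actConv (slice F w) p) ≤ m w * l2Norm p)
    (hm : ∀ p : Y →₀ ℝ, 0 ≤ p → l2Norm (actConv m p) ≤ K * l2Norm p) :
    l2Norm (actConv F P) ≤ K * l2Norm P := by
  have hpt : sliceNorms (actConv F P) ≤ actConv m (sliceNorms P) := fun y => by
    rw [sliceNorms_apply, slice_actConv F P Finset.subset_union_left,
      actConv_apply_of_subset _ _ Finset.subset_union_right]
    exact (l2Norm_sum_le _ _).trans
      (Finset.sum_le_sum fun w _ => hslice w _ (slice_nonneg hP _))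
  calc l2Norm (actConv F P) = l2Norm (sliceNorms (actConv F P)) := (l2Norm_sliceNorms _).symm
    _ ≤ l2Norm (actConv m (sliceNorms P)) := l2Norm_mono (sliceNorms_nonneg _) hpt
    _ ≤ K * l2Norm (sliceNorms P) := hm _ (sliceNorms_nonneg P)
    _ = K * l2Norm P := by rw [l2Norm_sliceNorms]

end ProductAction

section ProductQuotient

variable {G Γ : Type*} [Group G] [Group Γ] (H : Subgroup G) (Λ : Subgroup Γ)

attribute [local instance] prodMulAction

noncomputable def prodCosetSum (F : G × Γ →₀ ℝ) : (G ⧸ H) × (Γ ⧸ Λ) →₀ ℝ :=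
  F.mapDomain (Prod.map QuotientGroup.mk QuotientGroup.mk)

theorem l21Norm_prod (F : G × Γ →₀ ℂ) :
    l21Norm (H.prod Λ) F = l2Norm (prodCosetSum H Λ (normFun F)) := by
  rw [l21Norm_eq, cosetSum, prodCosetSum,
    ← l2Norm_mapDomain_of_injective (QuotientGroup.prodEquiv H Λ).injective, ← mapDomain_comp]
  rfl

theorem l21Norm_prod_conv_le (F Φ : G × Γ →₀ ℂ) (m : Γ →₀ ℝ) {K : ℝ}
    (hslice : ∀ w (p : G ⧸ H →₀ ℝ), 0 ≤ p →
      l2Norm (actConv (slice (normFun F) w) p) ≤ m w * l2Norm p)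
    (hm : ∀ p : Γ ⧸ Λ →₀ ℝ, 0 ≤ p → l2Norm (actConv m p) ≤ K * l2Norm p) :
    l21Norm (H.prod Λ) (conv F Φ) ≤ K * l21Norm (H.prod Λ) Φ := by
  rw [l21Norm_prod, l21Norm_prod]
  calc l2Norm (prodCosetSum H Λ (normFun (conv F Φ)))
      ≤ l2Norm (prodCosetSum H Λ (conv (normFun F) (normFun Φ))) :=
        l2Norm_mono (mapDomain_nonneg (normFun_nonneg _)) (mapDomain_mono (normFun_conv_le F Φ))
    _ = l2Norm (actConv (normFun F) (prodCosetSum H Λ (normFun Φ))) := by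
        rw [prodCosetSum, conv_eq_actConv, mapDomain_actConv (fun _ _ => rfl), prodCosetSum]
    _ ≤ K * l2Norm (prodCosetSum H Λ (normFun Φ)) :=
        l2Norm_actConv_prod_le _ (mapDomain_nonneg (normFun_nonneg Φ)) m hslice hm

end ProductQuotient

section WordLength

variable {G G' : Type*} [Group G] [Group G'] {S : Set G}

theorem submonoid_closure_eq_top (hSsym : ∀ s ∈ S, s⁻¹ ∈ S) (hSgen : Subgroup.closure S = ⊤) :
    Submonoid.closure S = ⊤ := by
  rw [← Subgroup.top_toSubmonoid, ← hSgen, Subgroup.closure_toSubmonoid,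
    Set.union_eq_left.2 fun s hs => by simpa using hSsym _ hs]

theorem wordLength_le_length {l : List G} (hl : ∀ s ∈ l, s ∈ S) : wordLength S l.prod ≤ l.length :=
  Nat.sInf_le ⟨l, hl, rfl, rfl⟩

theorem exists_list_length_eq_wordLength (hS : Submonoid.closure S = ⊤) (x : G) :
    ∃ l : List G, (∀ s ∈ l, s ∈ S) ∧ l.length = wordLength S x ∧ l.prod = x := by
  have hx : x ∈ Submonoid.closure S := hS ▸ Submonoid.mem_top x
  obtain ⟨l, hl, rfl⟩ := Submonoid.exists_list_of_mem_closure hx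
  exact Nat.sInf_mem
    (s := {n | ∃ l' : List G, (∀ s ∈ l', s ∈ S) ∧ l'.length = n ∧ l'.prod = l.prod})
    ⟨_, l, hl, rfl, rfl⟩

theorem wordLength_mul_le (hS : Submonoid.closure S = ⊤) (x y : G) :
    wordLength S (x * y) ≤ wordLength S x + wordLength S y := by
  obtain ⟨l, hl, hlx, rfl⟩ := exists_list_length_eq_wordLength hS x
  obtain ⟨l', hl', hly, rfl⟩ := exists_list_length_eq_wordLength hS y
  rw [← hlx, ← hly, ← List.length_append, ← List.prod_append]
  exact wordLength_le_length fun s hs => (List.mem_append.1 hs).elim (hl s) (hl' s)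

theorem wordLength_inv_le (hS : Submonoid.closure S = ⊤) (hSsym : ∀ s ∈ S, s⁻¹ ∈ S) (x : G) :
    wordLength S x⁻¹ ≤ wordLength S x := by
  obtain ⟨l, hl, hlx, rfl⟩ := exists_list_length_eq_wordLength hS x
  rw [← hlx, List.prod_inv_reverse, ← List.length_map (f := fun s : G => s⁻¹),
    ← List.length_reverse]
  exact wordLength_le_length fun s hs => by
    obtain ⟨t, ht, rfl⟩ := List.mem_map.1 (List.mem_reverse.1 hs)
    exact hSsym t (hl t ht)

theorem finite_setOf_wordLength_le (hSfin : S.Finite) (hS : Submonoid.closure S = ⊤) (R : ℕ) :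
    {x | wordLength S x ≤ R}.Finite := by
  have := hSfin.to_subtype
  refine (Set.finite_Iic R).biUnion (fun n _ => Set.finite_range
    fun f : Fin n → S => (List.ofFn fun i => (f i : G)).prod) |>.subset fun x hx => ?_
  obtain ⟨l, hl, hlx, rfl⟩ := exists_list_length_eq_wordLength hS x
  refine Set.mem_biUnion (x := l.length) (hlx.trans_le hx)
    ⟨fun i => ⟨l.get i, hl _ (l.get_mem i)⟩, ?_⟩
  simp only [List.ofFn_get]

theorem prod_filter_ne_one (l : List G) : (l.filter (· ≠ 1)).prod = l.prod := by
  induction l with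
  | nil => rfl
  | cons a l ih =>
    by_cases ha : a = 1
    · rw [List.filter_cons_of_neg (by simpa using ha), ih, List.prod_cons, ha, one_mul]
    · rw [List.filter_cons_of_pos (by simpa using ha), List.prod_cons, List.prod_cons, ih]

theorem wordLength_map_le {T : Set G'} (φ : G →* G') (hφ : ∀ s ∈ S, φ s ∈ T ∨ φ s = 1)
    (hS : Submonoid.closure S = ⊤) (x : G) : wordLength T (φ x) ≤ wordLength S x := by
  obtain ⟨l, hl, hlx, rfl⟩ := exists_list_length_eq_wordLength hS x
  rw [← hlx, map_list_prod, ← prod_filter_ne_one]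
  refine (wordLength_le_length fun t ht => ?_).trans
    ((List.length_filter_le _ _).trans_eq (List.length_map _))
  obtain ⟨ht, hne⟩ := List.mem_filter.1 ht
  obtain ⟨s, hs, rfl⟩ := List.mem_map.1 ht
  exact (hφ s (hl s hs)).resolve_right (by simpa using hne)

theorem wordLength_image_mulEquiv (e : G ≃* G') (S : Set G) (x : G) :
    wordLength (e '' S) (e x) = wordLength S x := by
  have key : ∀ l : List G, ((∀ s ∈ l.map e, s ∈ e '' S) ↔ ∀ s ∈ l, s ∈ S) ∧
      ((l.map e).prod = e x ↔ l.prod = x) := fun l =>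
    ⟨by simp, by rw [← map_list_prod, e.apply_eq_iff_eq]⟩
  unfold wordLength
  congr 1
  ext n
  refine ⟨fun ⟨l', hl', hn, hp⟩ => ?_,
    fun ⟨l, hl, hn, hp⟩ => ⟨l.map e, (key l).1.2 hl, by simpa using hn, (key l).2.2 hp⟩⟩
  obtain ⟨l, rfl⟩ : ∃ l : List G, l.map e = l' := ⟨l'.map e.symm, by simp [List.map_map]⟩
  exact ⟨l, (key l).1.1 hl', by simpa using hn, (key l).2.1 hp⟩

end WordLength

section Transport

variable {G G' : Type*} [Group G] [Group G'] (e : G ≃* G')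

theorem conv_mapDomain_mulEquiv (f ϕ : G →₀ ℂ) :
    conv (f.mapDomain e) (ϕ.mapDomain e) = (conv f ϕ).mapDomain e := by
  rw [conv, conv, mapDomain_sum,
    sum_mapDomain_index (by simp) (by simp [add_smul])]
  refine Finsupp.sum_congr fun z _ => ?_
  rw [mapDomain_smul, ← mapDomain_comp, ← mapDomain_comp]
  congr 2
  exact funext fun x => (map_mul e z x).symm

theorem normFun_mapDomain_mulEquiv (f : G →₀ ℂ) :
    normFun (f.mapDomain e) = (normFun f).mapDomain e := by
  ext y
  rw [normFun_apply, show (e : G → G') = e.toEquiv from rfl, mapDomain_equiv_apply,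
    mapDomain_equiv_apply, normFun_apply]

noncomputable def quotientEquivMap (H : Subgroup G) : G ⧸ H ≃ G' ⧸ H.map e.toMonoidHom :=
  Quotient.congr e.toEquiv fun a b => by
    rw [QuotientGroup.leftRel_apply, QuotientGroup.leftRel_apply]
    change _ ↔ (e a)⁻¹ * e b ∈ _
    rw [← map_inv, ← map_mul]
    exact (Subgroup.mem_map_iff_mem (f := e.toMonoidHom) e.injective).symm

theorem l21Norm_mapDomain_mulEquiv (H : Subgroup G) (f : G →₀ ℂ) :
    l21Norm (H.map e.toMonoidHom) (f.mapDomain e) = l21Norm H f := by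
  rw [l21Norm_eq, l21Norm_eq, normFun_mapDomain_mulEquiv, cosetSum, cosetSum, ← mapDomain_comp,
    ← l2Norm_mapDomain_of_injective (quotientEquivMap e H).injective, ← mapDomain_comp]
  rfl

theorem PairRD.map_mulEquiv {S : Set G} {H : Subgroup G} (h : PairRD S H) :
    PairRD (e '' S) (H.map e.toMonoidHom) := by
  obtain ⟨C, D, hC, hRD⟩ := h
  refine ⟨C, D, hC, fun R f ϕ hf => ?_⟩
  have hinv : ∀ g : G' →₀ ℂ, (g.mapDomain e.symm).mapDomain e = g := fun g => by
    rw [← mapDomain_comp, show (e ∘ e.symm : G' → G') = id from funext e.apply_symm_apply,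
      mapDomain_id]
  have hball : supportedInBall S R (f.mapDomain e.symm) := fun x hx => by
    obtain ⟨y, hy, rfl⟩ := Finset.mem_image.1 (mapDomain_support hx)
    simpa only [wordLength_image_mulEquiv, MulEquiv.apply_symm_apply] using
      (wordLength_image_mulEquiv e S (e.symm y)).symm.trans_le (by simpa using hf y hy)
  have := hRD R _ (ϕ.mapDomain e.symm) hball
  rwa [← l21Norm_mapDomain_mulEquiv e H, ← l21Norm_mapDomain_mulEquiv e H,
    ← l21Norm_mapDomain_mulEquiv e H, ← conv_mapDomain_mulEquiv, hinv, hinv] at this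

end Transport

section ProductGenerators

variable {G Γ : Type*} [Group G] [Group Γ] {S : Set G} {T : Set Γ}

def prodGen (S : Set G) (T : Set Γ) : Set (G × Γ) :=
  (fun s : G => (s, (1 : Γ))) '' S ∪ (fun t : Γ => ((1 : G), t)) '' T

theorem submonoid_closure_prodGen (hS : Submonoid.closure S = ⊤)
    (hT : Submonoid.closure T = ⊤) : Submonoid.closure (prodGen S T) = ⊤ := by
  rw [prodGen, Submonoid.closure_union,
    show (fun s : G => (s, (1 : Γ))) = MonoidHom.inl G Γ from rfl,
    show (fun t : Γ => ((1 : G), t)) = MonoidHom.inr G Γ from rfl, ← MonoidHom.map_mclosure,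
    ← MonoidHom.map_mclosure, hS, hT, ← MonoidHom.mrange_eq_map, ← MonoidHom.mrange_eq_map,
    Submonoid.mrange_inl_sup_mrange_inr]

theorem wordLength_fst_le (hS : Submonoid.closure S = ⊤) (hT : Submonoid.closure T = ⊤)
    (x : G × Γ) : wordLength S x.1 ≤ wordLength (prodGen S T) x :=
  wordLength_map_le (MonoidHom.fst G Γ) (fun _ hx => by
    rcases hx with ⟨s, hs, rfl⟩ | ⟨t, -, rfl⟩
    exacts [Or.inl hs, Or.inr rfl]) (submonoid_closure_prodGen hS hT) x

theorem wordLength_snd_le (hS : Submonoid.closure S = ⊤) (hT : Submonoid.closure T = ⊤)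
    (x : G × Γ) : wordLength T x.2 ≤ wordLength (prodGen S T) x :=
  wordLength_map_le (MonoidHom.snd G Γ) (fun _ hx => by
    rcases hx with ⟨s, -, rfl⟩ | ⟨t, ht, rfl⟩
    exacts [Or.inr rfl, Or.inl ht]) (submonoid_closure_prodGen hS hT) x

theorem PairRD.prodComm {H : Subgroup G} {Λ : Subgroup Γ} (h : PairRD (prodGen T S) (Λ.prod H)) :
    PairRD (prodGen S T) (H.prod Λ) := by
  have hgen : MulEquiv.prodComm '' prodGen T S = prodGen S T := by
    rw [prodGen, prodGen, Set.image_union, Set.image_image, Set.image_image, Set.union_comm]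
    rfl
  have hsub : (Λ.prod H).map (MulEquiv.prodComm : Γ × G ≃* G × Γ).toMonoidHom = H.prod Λ := by
    ext ⟨g, γ⟩
    simp [Subgroup.mem_map, Subgroup.mem_prod, and_comm]
  simpa only [hgen, hsub] using PairRD.map_mulEquiv MulEquiv.prodComm h

end ProductGenerators

theorem sqrt_mul_pow_le {C x : ℝ} (hC : 0 ≤ C) (hx : 1 ≤ x) (D : ℕ) :
    √(C * x ^ D) ≤ √C * x ^ D := by
  have h1 : 1 ≤ x ^ D := one_le_pow₀ hx
  rw [Real.sqrt_mul hC]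
  exact mul_le_mul_of_nonneg_left ((Real.sqrt_le_left (by positivity)).2 (by nlinarith))
    (Real.sqrt_nonneg C)

section Counting

variable {G : Type*} [Group G] {S : Set G} {H : Subgroup G}

theorem card_filter_mk_eq_le (hS : Submonoid.closure S = ⊤) (hSsym : ∀ s ∈ S, s⁻¹ ∈ S)
    {W : Finset G} {R : ℕ} (hW : ∀ w ∈ W, wordLength S w ≤ R)
    (hfin : {x | x ∈ H ∧ wordLength S x ≤ 2 * R}.Finite) (y : G ⧸ H) :
    (W.filter ((QuotientGroup.mk : G → G ⧸ H) · = y)).card ≤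
      {x | x ∈ H ∧ wordLength S x ≤ 2 * R}.ncard := by
  rcases (W.filter ((QuotientGroup.mk : G → G ⧸ H) · = y)).eq_empty_or_nonempty with h | ⟨w₀, hw₀⟩
  · simp [h]
  rw [← Set.ncard_coe_finset]
  obtain ⟨hw₀W, hw₀y⟩ := Finset.mem_filter.1 hw₀
  refine Set.ncard_le_ncard_of_injOn (w₀⁻¹ * ·) (fun w hw => ?_)
    (fun _ _ _ _ h => mul_left_cancel h) hfin
  obtain ⟨hwW, hwy⟩ := Finset.mem_filter.1 hw
  refine ⟨QuotientGroup.eq.1 (hw₀y.trans hwy.symm), ?_⟩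
  calc wordLength S (w₀⁻¹ * w) ≤ wordLength S w₀⁻¹ + wordLength S w := wordLength_mul_le hS _ _
    _ ≤ wordLength S w₀ + wordLength S w := by gcongr; exact wordLength_inv_le hS hSsym w₀
    _ ≤ 2 * R := by linarith [hW w₀ hw₀W, hW w hwW]

theorem sqrt_ncard_le_of_polyGrowth {C : ℝ} {D : ℕ} (hC : 0 ≤ C)
    (hH : ∀ R : ℕ, ({x | x ∈ H ∧ wordLength S x ≤ R}.ncard : ℝ) ≤ C * ((R : ℝ) + 1) ^ D)
    (R : ℕ) : √({x | x ∈ H ∧ wordLength S x ≤ 2 * R}.ncard : ℝ) ≤ √(C * 2 ^ D) * (R + 1) ^ D := by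
  refine (Real.sqrt_le_sqrt ((hH (2 * R)).trans ?_)).trans
    (sqrt_mul_pow_le (by positivity) (by simp) D)
  rw [mul_assoc, ← mul_pow]
  exact mul_le_mul_of_nonneg_left (pow_le_pow_left₀ (by positivity) (by push_cast; linarith) D) hC

end Counting

section ProductRapidDecay

variable {G Γ : Type*} [Group G] [Group Γ] {S : Set G} {T : Set Γ} {H : Subgroup G}
  {Λ : Subgroup Γ}

theorem wordLength_le_of_mem_support {R : ℕ} {F : G × Γ →₀ ℂ} (hS : Submonoid.closure S = ⊤)
    (hT : Submonoid.closure T = ⊤) (hF : supportedInBall (prodGen S T) R F) {x : G × Γ}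
    (hx : x ∈ (normFun F).support) : wordLength S x.1 ≤ R ∧ wordLength T x.2 ≤ R := by
  rw [support_normFun] at hx
  exact ⟨(wordLength_fst_le hS hT x).trans (hF x hx), (wordLength_snd_le hS hT x).trans (hF x hx)⟩

theorem pairRD_prod_of_polyGrowthQuotient (hSfin : S.Finite) (hS : Submonoid.closure S = ⊤)
    (hT : Submonoid.closure T = ⊤) (hΓΛ : PairRD T Λ) (hH : polyGrowthQuotient S H) :
    PairRD (prodGen S T) (H.prod Λ) := by
  obtain ⟨C, D, hC, hΓ⟩ := PairRD.exists_l2Norm_actConv_le hΓΛ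
  obtain ⟨CH, DH, hCH, hH⟩ := hH
  refine ⟨C * √CH, D + DH, by positivity, fun R F Φ hF => ?_⟩
  set f := normFun F
  set m := f.mapDomain Prod.snd
  have hR : (1 : ℝ) ≤ R + 1 := by linarith [(R.cast_nonneg : (0 : ℝ) ≤ R)]
  have hmR : supportedInBall T R m := fun w hw => by
    obtain ⟨x, hx, rfl⟩ := Finset.mem_image.1 (mapDomain_support hw)
    exact (wordLength_le_of_mem_support hS hT hF hx).2
  have hslice : ∀ w (p : G ⧸ H →₀ ℝ), 0 ≤ p →
      l2Norm (actConv (slice f w) p) ≤ m w * l2Norm p := fun w p _ =>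
    (l2Norm_actConv_le _ _).trans_eq (by rw [l1Norm_slice (normFun_nonneg F)])
  have hcard : (((prodCosetSum H Λ f).support.image Prod.fst).card : ℝ) ≤ CH * (R + 1) ^ DH := by
    refine le_trans ?_ (hH R)
    rw [← Set.ncard_coe_finset]
    refine Nat.cast_le.2 (Set.ncard_le_ncard (fun a ha => ?_)
      ((finite_setOf_wordLength_le hSfin hS R).image _))
    obtain ⟨q, hq, rfl⟩ := Finset.mem_image.1 ha
    obtain ⟨x, hx, rfl⟩ := Finset.mem_image.1 (mapDomain_support hq)
    exact ⟨x.1, (wordLength_le_of_mem_support hS hT hF hx).1, rfl⟩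
  have hgap : l2Norm (cosetSum Λ m) ≤ √CH * (R + 1) ^ DH * l21Norm (H.prod Λ) F := by
    have : cosetSum Λ m = (prodCosetSum H Λ f).mapDomain Prod.snd := by
      rw [cosetSum, prodCosetSum, ← mapDomain_comp, ← mapDomain_comp]
      rfl
    rw [this, l21Norm_prod]
    refine (l2Norm_mapDomain_snd_le _ fun x hx => Finset.mem_image_of_mem _ hx).trans
      (mul_le_mul_of_nonneg_right ?_ (l2Norm_nonneg _))
    exact (Real.sqrt_le_sqrt hcard).trans (sqrt_mul_pow_le hCH hR DH)
  calc l21Norm (H.prod Λ) (conv F Φ)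
      ≤ C * (R + 1) ^ D * l2Norm (cosetSum Λ m) * l21Norm (H.prod Λ) Φ :=
        l21Norm_prod_conv_le H Λ F Φ m hslice fun p hp =>
          hΓ R m p (mapDomain_nonneg (normFun_nonneg F)) hp hmR
    _ ≤ C * (R + 1) ^ D * (√CH * (R + 1) ^ DH * l21Norm (H.prod Λ) F) * l21Norm (H.prod Λ) Φ := by
        gcongr
        exact l2Norm_nonneg _
    _ = C * √CH * (R + 1) ^ (D + DH) * l21Norm (H.prod Λ) F * l21Norm (H.prod Λ) Φ := by ring

theorem l2Norm_cosetSum_sliceNorms_le (hT : Submonoid.closure T = ⊤) (hTsym : ∀ t ∈ T, t⁻¹ ∈ T)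
    {f : G × Γ →₀ ℝ} (hf : 0 ≤ f) {R : ℕ} (hfR : ∀ x ∈ f.support, wordLength T x.2 ≤ R)
    (hfin : {x | x ∈ Λ ∧ wordLength T x ≤ 2 * R}.Finite) :
    l2Norm (cosetSum Λ (sliceNorms (f.mapDomain (Prod.map (QuotientGroup.mk : G → G ⧸ H) id)))) ≤
      √({x | x ∈ Λ ∧ wordLength T x ≤ 2 * R}.ncard : ℝ) * l2Norm (prodCosetSum H Λ f) := by
  set N := f.mapDomain (Prod.map (QuotientGroup.mk : G → G ⧸ H) id)
  have hNW : ∀ w ∈ N.support.image Prod.snd, wordLength T w ≤ R := fun w hw => by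
    obtain ⟨x, hx, rfl⟩ := Finset.mem_image.1 hw
    obtain ⟨y, hy, rfl⟩ := Finset.mem_image.1 (mapDomain_support hx)
    exact hfR y hy
  have hN : N.mapDomain (Prod.map id QuotientGroup.mk) = prodCosetSum H Λ f := by
    rw [← mapDomain_comp]
    rfl
  have hcard := card_filter_mk_eq_le (H := Λ) hT hTsym hNW hfin
  rw [← hN]
  exact l2Norm_mapDomain_sliceNorms_le (mapDomain_nonneg hf) _ fun y => by convert hcard y

theorem pairRD_prod_of_polyGrowthSubgroup (hS : Submonoid.closure S = ⊤) (hTfin : T.Finite)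
    (hT : Submonoid.closure T = ⊤) (hTsym : ∀ t ∈ T, t⁻¹ ∈ T) (hGH : PairRD S H)
    (hΓΛ : PairRD T Λ) (hΛ : polyGrowthSubgroup T Λ) : PairRD (prodGen S T) (H.prod Λ) := by
  obtain ⟨C, D, hC, hΓ⟩ := PairRD.exists_l2Norm_actConv_le hΓΛ
  obtain ⟨CG, DG, hCG, hG⟩ := PairRD.exists_l2Norm_actConv_le hGH
  obtain ⟨CL, DL, hCL, hΛ⟩ := hΛ
  refine ⟨C * CG * √(CL * 2 ^ DL), D + DG + DL, by positivity, fun R F Φ hF => ?_⟩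
  set f := normFun F
  set c : ℝ := CG * (R + 1) ^ DG
  set m := c • sliceNorms (f.mapDomain (Prod.map (QuotientGroup.mk : G → G ⧸ H) id))
  have hfR := fun x (hx : x ∈ f.support) => wordLength_le_of_mem_support hS hT hF hx
  have hmR : supportedInBall T R m := fun w hw => by
    obtain ⟨x, hx, rfl⟩ := Finset.mem_image.1 (support_sliceNorms_subset _ (support_smul hw))
    obtain ⟨y, hy, rfl⟩ := Finset.mem_image.1 (mapDomain_support hx)
    exact (hfR y hy).2
  have hslice : ∀ w (p : G ⧸ H →₀ ℝ), 0 ≤ p →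
      l2Norm (actConv (slice f w) p) ≤ m w * l2Norm p := fun w p hp => by
    have hball : supportedInBall S R (slice f w) := fun z hz =>
      (hfR (z, w) (by simpa [slice_apply] using hz)).1
    calc l2Norm (actConv (slice f w) p) ≤ c * l2Norm (cosetSum H (slice f w)) * l2Norm p :=
          hG R (slice f w) p (slice_nonneg (normFun_nonneg F) w) hp hball
      _ = m w * l2Norm p := by rw [cosetSum, ← slice_mapDomain_prodMap_id]; rfl
  have hfin : {x | x ∈ Λ ∧ wordLength T x ≤ 2 * R}.Finite :=
    (finite_setOf_wordLength_le hTfin hT (2 * R)).subset fun x hx => hx.2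
  have hgap :
      l2Norm (cosetSum Λ m) ≤ c * (√(CL * 2 ^ DL) * (R + 1) ^ DL * l21Norm (H.prod Λ) F) := by
    rw [cosetSum, mapDomain_smul, ← cosetSum, l2Norm_smul, abs_of_nonneg (by positivity),
      l21Norm_prod]
    refine mul_le_mul_of_nonneg_left ((l2Norm_cosetSum_sliceNorms_le hT hTsym (normFun_nonneg F)
      (fun x hx => (hfR x hx).2) hfin).trans ?_) (by positivity)
    exact mul_le_mul_of_nonneg_right (sqrt_ncard_le_of_polyGrowth hCL hΛ R) (l2Norm_nonneg _)
  calc l21Norm (H.prod Λ) (conv F Φ)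
      ≤ C * (R + 1) ^ D * l2Norm (cosetSum Λ m) * l21Norm (H.prod Λ) Φ :=
        l21Norm_prod_conv_le H Λ F Φ m hslice fun p hp =>
          hΓ R m p (smul_nonneg (by positivity) (sliceNorms_nonneg _)) hp hmR
    _ ≤ C * (R + 1) ^ D * (c * (√(CL * 2 ^ DL) * (R + 1) ^ DL * l21Norm (H.prod Λ) F)) *
          l21Norm (H.prod Λ) Φ := by
        gcongr
        exact l2Norm_nonneg _
    _ = C * CG * √(CL * 2 ^ DL) * (R + 1) ^ (D + DG + DL) * l21Norm (H.prod Λ) F *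
          l21Norm (H.prod Λ) Φ := by ring

end ProductRapidDecay

end RapidDecay

/-- stability of the rapid decay property for pairs under direct
products, assuming one of the four polynomial growth conditions. -/
theorem statement19 {G Γ : Type*} [Group G] [Group Γ]
    (S : Set G) (hSfin : S.Finite) (hSsym : ∀ s ∈ S, s⁻¹ ∈ S)
    (hSgen : Subgroup.closure S = ⊤)
    (T : Set Γ) (hTfin : T.Finite) (hTsym : ∀ t ∈ T, t⁻¹ ∈ T)
    (hTgen : Subgroup.closure T = ⊤)
    (H : Subgroup G) (Λ : Subgroup Γ)
    (hGH : PairRD S H) (hΓΛ : PairRD T Λ)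
    (hpoly : polyGrowthQuotient S H ∨ polyGrowthQuotient T Λ ∨
      polyGrowthSubgroup S H ∨ polyGrowthSubgroup T Λ) :
    PairRD ((fun s : G => (s, (1 : Γ))) '' S ∪ (fun t : Γ => ((1 : G), t)) '' T)
      (H.prod Λ) := by
  have hS := RapidDecay.submonoid_closure_eq_top hSsym hSgen
  have hT := RapidDecay.submonoid_closure_eq_top hTsym hTgen
  change PairRD (RapidDecay.prodGen S T) (H.prod Λ)
  rcases hpoly with hH | hΛ | hH | hΛ
  · exact RapidDecay.pairRD_prod_of_polyGrowthQuotient hSfin hS hT hΓΛ hH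
  · exact RapidDecay.PairRD.prodComm
      (RapidDecay.pairRD_prod_of_polyGrowthQuotient hTfin hT hS hGH hΛ)
  · exact RapidDecay.PairRD.prodComm
      (RapidDecay.pairRD_prod_of_polyGrowthSubgroup hT hSfin hS hSsym hΓΛ hGH hH)
  · exact RapidDecay.pairRD_prod_of_polyGrowthSubgroup hS hTfin hT hTsym hGH hΓΛ hΛ
end
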